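/- arXiv:1903.07576 — 7 statements merged into one kernel-verified Lean document; each statement's English description precedes it below -/
import Mathlib

section
/- Let r, ρ > 0, s > 0, η ≥ 0. For any two Hamiltonians F and G with |F|_{r+ρ,s,η} < ∞ and |G|_{r+ρ,s,η} < ∞, their Poisson bracket {F,G} satisfies |{F,G}|_{r,s,η} ≤ 8·max{1, r/ρ}·|F|_{r+ρ,s,η}·|G|_{r+ρ,s,η}. Moreover, for Lipschitz families F, G over D_γ, the same estimate holds for the weighted Lipschitz norms: ‖{F,G}‖_{r,s,η} ≤ 8·max{1, r/ρ}·‖F‖_{r+ρ,s,η}·‖G‖_{r+ρ,s,η}. -/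
/-! Expanding `{F,G}` coefficientwise, the product `F_{αβ} G_{α'β'}` contracted at the index `m`
lands on the single coefficient `(α + α' - e_m, β + β' - e_m)`, and its weight
`u₀(r)^{A+B-2e_j}` splits into the weights of the two factors. Shrinking the radius from `r+ρ`
to `r` gains `δ^{2|α|-2}`, `δ = r/(r+ρ)`, on the factor carrying `j` (mass conservation
`|α| = |β|`); this pays for the degree `|α|` produced by summing the contraction weight `α_m`
over `m`, since `d δ^{2d-2} ≤ (1-δ)⁻¹ = (r+ρ)/ρ`. Four such products give
`4 (r+ρ)/ρ ≤ 8 max{1, r/ρ}`. The Lipschitz estimate follows by the Leibniz rule, the bracket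
being bilinear on the coefficients the norm sees, where its series converge absolutely. -/
open scoped ENNReal BigOperators Classical

noncomputable section

/-- Multi-indices: finitely supported functions `ℤ → ℕ`. -/
abbrev MIdx := ℤ →₀ ℕ

/-- Total degree `|α| = Σ_j α_j`. -/
def deg (α : MIdx) : ℕ := ∑ j ∈ α.support, α j

/-- Momentum `π(α - β) = Σ_j j (α_j - β_j)`. -/
def mom (α β : MIdx) : ℤ :=
  ∑ j ∈ α.support ∪ β.support, j * ((α j : ℤ) - (β j : ℤ))

/-- `⟨j⟩ = max(|j|, 1)` as a real number. -/
def jb (j : ℤ) : ℝ := max |(j : ℝ)| 1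

/-- The weight `u₀(r)_j = r ⟨j⟩^{-p} e^{-(a|j| + s ⟨j⟩^θ)}`. -/
def u0 (θ p a r s : ℝ) (j : ℤ) : ℝ :=
  r * (jb j ^ p * Real.exp (a * |(j : ℝ)| + s * jb j ^ θ))⁻¹

/-- The coefficient weight `c^{(j)}_{r,s,η}(α,β) = u₀^{α+β-2e_j} e^{η |π(α-β)|}`. -/
def cwt (θ p a r s η : ℝ) (j : ℤ) (α β : MIdx) : ℝ :=
  (∏ i ∈ insert j (α.support ∪ β.support),
      u0 θ p a r s i ^ (((α i : ℤ) + (β i : ℤ)) - if i = j then 2 else 0)) *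
    Real.exp (η * |(mom α β : ℝ)|)

/-- The majorant norm `|H|_{r,s,η} = sup_j Σ_{α,β} |H_{α,β}| β_j u₀^{α+β-2e_j} e^{η|π(α-β)|}`
(with values in `ℝ≥0∞`). -/
def hnorm (θ p a r s η : ℝ) (H : MIdx → MIdx → ℂ) : ℝ≥0∞ :=
  ⨆ j : ℤ, ∑' q : MIdx × MIdx,
    ENNReal.ofReal (‖H q.1 q.2‖ * (q.2 j : ℝ) * cwt θ p a r s η j q.1 q.2)

/-- A family of coefficients is a Hamiltonian: mass conservation (`H_{α,β} = 0` unless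
`|α| = |β|`) and the reality condition `H_{β,α} = conj (H_{α,β})`. -/
def IsHam (H : MIdx → MIdx → ℂ) : Prop :=
  (∀ α β : MIdx, deg α ≠ deg β → H α β = 0) ∧
  (∀ α β : MIdx, H β α = (starRingEnd ℂ) (H α β))

/-- The set `D_γ` of `γ`-Diophantine frequencies. -/
def Dio (γ : ℝ) : Set (ℤ → ℝ) :=
  {ω | (∀ j : ℤ, |ω j - (j : ℝ) ^ 2| ≤ 1 / 2) ∧
    ∀ ℓ : ℤ →₀ ℤ, ℓ ≠ 0 →
      γ * ∏ n ∈ ℓ.support, (1 + (ℓ n : ℝ) ^ 2 * jb n ^ 2)⁻¹ <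
        |∑ j ∈ ℓ.support, ω j * (ℓ j : ℝ)|}

/-- The sup distance `|ω - ω'|_∞` (with values in `ℝ≥0∞`). -/
def dsup (ω ω' : ℤ → ℝ) : ℝ≥0∞ := ⨆ j : ℤ, ENNReal.ofReal |ω j - ω' j|

/-- The weighted Lipschitz norm
`‖H‖_{r,s,η} = sup_{ω ∈ D_γ} |H(ω)|_{r,s,η} + γ sup_{ω≠ω'} |H(ω)-H(ω')|_{r,s,η} / |ω-ω'|_∞`. -/
def hnormLip (γ θ p a r s η : ℝ) (H : (ℤ → ℝ) → MIdx → MIdx → ℂ) : ℝ≥0∞ :=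
  (⨆ ω ∈ Dio γ, hnorm θ p a r s η (H ω)) +
    ENNReal.ofReal γ *
      ⨆ ω ∈ Dio γ, ⨆ ω' ∈ Dio γ,
        hnorm θ p a r s η (fun α β => H ω α β - H ω' α β) / dsup ω ω'

/-- Coefficients of the Poisson bracket
`{F,G} = i Σ_j (∂F/∂u_j ∂G/∂ū_j - ∂F/∂ū_j ∂G/∂u_j)`: the coefficient at the pair `(A,B)` is
`Σ_{j, α+α' = A+e_j, β+β' = B+e_j} i (α_j β'_j - β_j α'_j) F_{α,β} G_{α',β'}`. -/
def pois (F G : MIdx → MIdx → ℂ) (A B : MIdx) : ℂ :=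
  ∑' t : ℤ × (MIdx × MIdx) × (MIdx × MIdx),
    if t.2.1.1 + t.2.2.1 = A + Finsupp.single t.1 1 ∧
        t.2.1.2 + t.2.2.2 = B + Finsupp.single t.1 1 then
      Complex.I *
        ((t.2.1.1 t.1 : ℂ) * (t.2.2.2 t.1 : ℂ) - (t.2.1.2 t.1 : ℂ) * (t.2.2.1 t.1 : ℂ)) *
        F t.2.1.1 t.2.1.2 * G t.2.2.1 t.2.2.2
    else 0

open Finsupp

lemma mom_eq_weight_sub_weight (α β : MIdx) :
    mom α β = weight (fun i : ℤ => i) α - weight (fun i : ℤ => i) β := by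
  rw [weight_apply, weight_apply,
    Finsupp.sum_of_support_subset α Finset.subset_union_left _ (by simp),
    Finsupp.sum_of_support_subset β Finset.subset_union_right _ (by simp), mom,
    ← Finset.sum_sub_distrib]
  simp [mul_sub, mul_comm]

lemma mom_swap (α β : MIdx) : mom β α = -mom α β := by
  rw [mom_eq_weight_sub_weight, mom_eq_weight_sub_weight, neg_sub]

lemma mom_eq_add_of_add_eq {m : ℤ} {A B α β α' β' : MIdx}
    (hA : α + α' = A + single m 1) (hB : β + β' = B + single m 1) :
    mom A B = mom α β + mom α' β' := by
  have hA' := congrArg (weight fun i : ℤ => i) hA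
  have hB' := congrArg (weight fun i : ℤ => i) hB
  simp only [map_add] at hA' hB'
  simp only [mom_eq_weight_sub_weight]
  linarith

def multiPow (u : ℤ → ℝ) (α : MIdx) : ℝ := α.prod fun i n => u i ^ n

lemma multiPow_add (u : ℤ → ℝ) (α β : MIdx) :
    multiPow u (α + β) = multiPow u α * multiPow u β :=
  prod_add_index' (by simp) (by simp [pow_add])

lemma multiPow_single_one (u : ℤ → ℝ) (m : ℤ) : multiPow u (single m 1) = u m := by
  simp [multiPow]

lemma multiPow_const_mul (c : ℝ) (u : ℤ → ℝ) (α : MIdx) :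
    multiPow (fun i => c * u i) α = c ^ deg α * multiPow u α := by
  simp only [multiPow, mul_pow, Finsupp.prod]
  rw [Finset.prod_mul_distrib, Finset.prod_pow_eq_pow_sum]
  rfl

lemma multiPow_pos {u : ℤ → ℝ} (hu : ∀ i, 0 < u i) (α : MIdx) : 0 < multiPow u α :=
  Finset.prod_pos fun i _ => pow_pos (hu i) _

lemma u0_pos {θ p a r s : ℝ} (hr : 0 < r) (j : ℤ) : 0 < u0 θ p a r s j := by
  unfold u0
  have : (0 : ℝ) < jb j := lt_max_of_lt_right one_pos
  positivity

lemma u0_eq_div_mul {θ p a r r' s : ℝ} (hr' : r' ≠ 0) (j : ℤ) :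
    u0 θ p a r s j = r / r' * u0 θ p a r' s j := by
  unfold u0; field_simp

section Weight

variable {θ p a r s η : ℝ}

lemma cwt_pos (hr : 0 < r) (j : ℤ) (α β : MIdx) : 0 < cwt θ p a r s η j α β :=
  mul_pos (Finset.prod_pos fun i _ => zpow_pos (u0_pos hr i) _) (Real.exp_pos _)

lemma cwt_eq_multiPow (hr : 0 < r) (j : ℤ) (α β : MIdx) :
    cwt θ p a r s η j α β =
      multiPow (u0 θ p a r s) α * multiPow (u0 θ p a r s) β / u0 θ p a r s j ^ 2 *
        Real.exp (η * |(mom α β : ℝ)|) := by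
  set u := u0 θ p a r s
  set S := insert j (α.support ∪ β.support)
  have hu : ∀ i, u i ≠ 0 := fun i => (u0_pos hr i).ne'
  have hfactor : ∀ i, u i ^ (((α i : ℤ) + β i) - if i = j then 2 else 0) =
      u i ^ α i * u i ^ β i * if i = j then (u i ^ 2)⁻¹ else 1 := by
    intro i
    rw [zpow_sub₀ (hu i), zpow_add₀ (hu i)]
    split_ifs <;> simp [div_eq_mul_inv]
  have hα : multiPow u α = ∏ i ∈ S, u i ^ α i :=
    prod_of_support_subset α (fun i hi => by simp [S, hi]) _ (by simp)
  have hβ : multiPow u β = ∏ i ∈ S, u i ^ β i :=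
    prod_of_support_subset β (fun i hi => by simp [S, hi]) _ (by simp)
  rw [cwt, Finset.prod_congr rfl fun i _ => hfactor i, Finset.prod_mul_distrib,
    Finset.prod_mul_distrib, Finset.prod_ite_eq', if_pos (Finset.mem_insert_self _ _), hα, hβ,
    div_eq_mul_inv]

lemma cwt_comm (hr : 0 < r) (j : ℤ) (α β : MIdx) :
    cwt θ p a r s η j β α = cwt θ p a r s η j α β := by
  rw [cwt_eq_multiPow hr, cwt_eq_multiPow hr, mom_swap, mul_comm (multiPow _ β)]
  push_cast
  rw [abs_neg]

/-- The monomial parts match exactly, the contracted `e_m` supplying the `u_m^{-2}`; only the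
momentum factor needs the triangle inequality. -/
lemma cwt_le_mul_of_add_eq (hr : 0 < r) (hη : 0 ≤ η) {j m : ℤ} {A B α β α' β' : MIdx}
    (hA : α + α' = A + single m 1) (hB : β + β' = B + single m 1) :
    cwt θ p a r s η j A B ≤ cwt θ p a r s η j α β * cwt θ p a r s η m α' β' := by
  set u := u0 θ p a r s
  have hpos : ∀ i, 0 < u i := u0_pos hr
  have hu : ∀ i, u i ≠ 0 := fun i => (hpos i).ne'
  have hA' := congrArg (multiPow u) hA
  have hB' := congrArg (multiPow u) hB
  simp only [multiPow_add, multiPow_single_one] at hA' hB'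
  have hexp : Real.exp (η * |(mom A B : ℝ)|) ≤
      Real.exp (η * |(mom α β : ℝ)|) * Real.exp (η * |(mom α' β' : ℝ)|) := by
    rw [← Real.exp_add, ← mul_add, mom_eq_add_of_add_eq hA hB, Int.cast_add]
    gcongr
    exact abs_add_le _ _
  rw [cwt_eq_multiPow hr, cwt_eq_multiPow hr, cwt_eq_multiPow hr]
  calc multiPow u A * multiPow u B / u j ^ 2 * Real.exp (η * |(mom A B : ℝ)|)
      ≤ multiPow u A * multiPow u B / u j ^ 2 *
          (Real.exp (η * |(mom α β : ℝ)|) * Real.exp (η * |(mom α' β' : ℝ)|)) := by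
        have := multiPow_pos hpos A
        have := multiPow_pos hpos B
        gcongr
    _ = _ := by
        rw [eq_div_of_mul_eq (hu m) hA'.symm, eq_div_of_mul_eq (hu m) hB'.symm]
        field_simp
        ring

lemma cwt_eq_zpow_mul {r' : ℝ} (hr : 0 < r) (hr' : 0 < r') (j : ℤ) (α β : MIdx) :
    cwt θ p a r s η j α β =
      (r / r') ^ ((deg α : ℤ) + deg β - 2) * cwt θ p a r' s η j α β := by
  have hδ : r / r' ≠ 0 := (div_pos hr hr').ne'
  have hu : u0 θ p a r s = fun i => r / r' * u0 θ p a r' s i :=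
    funext (u0_eq_div_mul hr'.ne')
  have hu' := (u0_pos (θ := θ) (p := p) (a := a) (s := s) hr' j).ne'
  rw [cwt_eq_multiPow hr, cwt_eq_multiPow hr', hu, multiPow_const_mul, multiPow_const_mul,
    zpow_sub₀ hδ, zpow_add₀ hδ]
  simp only [zpow_natCast]
  field_simp

lemma cwt_le_zpow_mul_of_add_eq {r' : ℝ} (hr : 0 < r) (hrr' : r ≤ r') (hη : 0 ≤ η)
    {j m : ℤ} {A B α β α' β' : MIdx}
    (hA : α + α' = A + single m 1) (hB : β + β' = B + single m 1)
    (hdeg : 2 ≤ deg α' + deg β') :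
    cwt θ p a r s η j A B ≤
      (r / r') ^ ((deg α : ℤ) + deg β - 2) * cwt θ p a r' s η j α β *
        cwt θ p a r' s η m α' β' := by
  have hr' : 0 < r' := hr.trans_le hrr'
  have hδ : 0 < r / r' := div_pos hr hr'
  have hgain : (r / r') ^ ((deg α' : ℤ) + deg β' - 2) ≤ 1 :=
    zpow_le_one₀ hδ ((div_le_one hr').2 hrr') (by omega)
  calc cwt θ p a r s η j A B ≤ cwt θ p a r s η j α β * cwt θ p a r s η m α' β' :=
        cwt_le_mul_of_add_eq hr hη hA hB
    _ = (r / r') ^ ((deg α : ℤ) + deg β - 2) * cwt θ p a r' s η j α β *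
          ((r / r') ^ ((deg α' : ℤ) + deg β' - 2) * cwt θ p a r' s η m α' β') := by
        rw [cwt_eq_zpow_mul hr hr', cwt_eq_zpow_mul hr hr']
    _ ≤ _ := mul_le_mul_of_nonneg_left (mul_le_of_le_one_left (cwt_pos hr' m α' β').le hgain)
        (mul_nonneg (zpow_nonneg hδ.le _) (cwt_pos hr' j α β).le)

end Weight

lemma natCast_mul_zpow_le {δ : ℝ} (h0 : 0 ≤ δ) (h1 : δ < 1) (d : ℕ) :
    d * δ ^ ((d : ℤ) + d - 2) ≤ (1 - δ)⁻¹ := by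
  rcases d with _ | n
  · simpa using (sub_pos.2 h1).le
  have hexp : ((n + 1 : ℕ) : ℤ) + (n + 1 : ℕ) - 2 = ((2 * n : ℕ) : ℤ) := by push_cast; ring
  rw [hexp, zpow_natCast]
  calc ((n + 1 : ℕ) : ℝ) * δ ^ (2 * n) ≤ ∑ _i ∈ Finset.range (n + 1), δ ^ n := by
        rw [Finset.sum_const, Finset.card_range, nsmul_eq_mul]
        exact mul_le_mul_of_nonneg_left (pow_le_pow_of_le_one h0 h1.le (by omega)) (by positivity)
    _ ≤ ∑ i ∈ Finset.range (n + 1), δ ^ i :=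
        Finset.sum_le_sum fun i hi =>
          pow_le_pow_of_le_one h0 h1.le (Nat.lt_succ_iff.1 (Finset.mem_range.1 hi))
    _ ≤ δ ^ 0 / (1 - δ) := by
        rw [Finset.range_eq_Ico]
        exact geom_sum_Ico_le_of_lt_one h0 h1
    _ = (1 - δ)⁻¹ := by rw [pow_zero, one_div]

namespace IsHam

variable {H H' : MIdx → MIdx → ℂ}

lemma deg_eq (hH : IsHam H) {α β : MIdx} (h : H α β ≠ 0) : deg α = deg β :=
  not_not.1 fun hne => h (hH.1 α β hne)

lemma enorm_swap (hH : IsHam H) (α β : MIdx) : ‖H β α‖ₑ = ‖H α β‖ₑ := by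
  rw [hH.2 α β, RCLike.enorm_conj]

lemma two_le_deg_add_deg (hH : IsHam H) {α β : MIdx} (h : H α β ≠ 0) {m : ℤ}
    (hm : α m ≠ 0 ∨ β m ≠ 0) : 2 ≤ deg α + deg β := by
  have hα : α m ≤ deg α := le_degree m α
  have hβ : β m ≤ deg β := le_degree m β
  have := hH.deg_eq h
  omega

lemma sub (hH : IsHam H) (hH' : IsHam H') : IsHam fun α β => H α β - H' α β :=
  ⟨fun α β hd => by simp [hH.1 α β hd, hH'.1 α β hd],
    fun α β => by simp [hH.2 α β, hH'.2 α β]⟩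

end IsHam

def weightedTerm (c : ℤ → MIdx → MIdx → ℝ) (H : MIdx → MIdx → ℂ) (σ : MIdx × MIdx → MIdx)
    (j : ℤ) (q : MIdx × MIdx) : ℝ≥0∞ :=
  ‖H q.1 q.2‖ₑ * (σ q j : ℝ≥0∞) * ENNReal.ofReal (c j q.1 q.2)

lemma tsum_natCast_apply (α : MIdx) : ∑' m, (α m : ℝ≥0∞) = deg α := by
  rw [tsum_eq_sum (s := α.support) fun m hm => by simp [notMem_support_iff.1 hm], deg,
    Nat.cast_sum]

section Norm

variable {θ p a r s η : ℝ}

lemma hnorm_eq_iSup_tsum_weightedTerm (H : MIdx → MIdx → ℂ) :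
    hnorm θ p a r s η H = ⨆ j, ∑' q, weightedTerm (cwt θ p a r s η) H Prod.snd j q := by
  unfold hnorm weightedTerm
  congr! 2 with j
  refine tsum_congr fun q => ?_
  rw [ENNReal.ofReal_mul (by positivity), ENNReal.ofReal_mul (norm_nonneg _), ofReal_norm,
    ENNReal.ofReal_natCast]

lemma tsum_weightedTerm_snd_le_hnorm (H : MIdx → MIdx → ℂ) (j : ℤ) :
    ∑' q, weightedTerm (cwt θ p a r s η) H Prod.snd j q ≤ hnorm θ p a r s η H := by
  rw [hnorm_eq_iSup_tsum_weightedTerm]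
  exact le_iSup (fun j => ∑' q, weightedTerm (cwt θ p a r s η) H Prod.snd j q) j

/-- By the reality condition the weight `α_j` may replace `β_j` in the majorant norm. -/
lemma IsHam.tsum_weightedTerm_le_hnorm {H : MIdx → MIdx → ℂ} (hr : 0 < r) (hH : IsHam H)
    {σ : MIdx × MIdx → MIdx} (hσ : σ = Prod.fst ∨ σ = Prod.snd) (j : ℤ) :
    ∑' q, weightedTerm (cwt θ p a r s η) H σ j q ≤ hnorm θ p a r s η H := by
  rcases hσ with rfl | rfl
  · rw [← (Equiv.prodComm MIdx MIdx).tsum_eq]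
    simp only [weightedTerm, Equiv.prodComm_apply, Prod.fst_swap, Prod.snd_swap, hH.enorm_swap,
      cwt_comm hr]
    exact tsum_weightedTerm_snd_le_hnorm H j
  · exact tsum_weightedTerm_snd_le_hnorm H j

lemma hnorm_le_add_of_enorm_le {X Y Z : MIdx → MIdx → ℂ}
    (h : ∀ α β, β ≠ 0 → ‖Z α β‖ₑ ≤ ‖X α β‖ₑ + ‖Y α β‖ₑ) :
    hnorm θ p a r s η Z ≤ hnorm θ p a r s η X + hnorm θ p a r s η Y := by
  set c := cwt θ p a r s η
  rw [hnorm_eq_iSup_tsum_weightedTerm]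
  refine iSup_le fun j => ?_
  calc ∑' q, weightedTerm c Z Prod.snd j q
      ≤ ∑' q, (weightedTerm c X Prod.snd j q + weightedTerm c Y Prod.snd j q) := by
        refine ENNReal.tsum_le_tsum fun q => ?_
        by_cases hq : q.2 = 0
        · simp [weightedTerm, hq]
        simp only [weightedTerm, ← add_mul]
        gcongr
        exact h _ _ hq
    _ = ∑' q, weightedTerm c X Prod.snd j q + ∑' q, weightedTerm c Y Prod.snd j q :=
        ENNReal.tsum_add
    _ ≤ _ := add_le_add (tsum_weightedTerm_snd_le_hnorm X j) (tsum_weightedTerm_snd_le_hnorm Y j)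

end Norm

/-- The gain `(r/r')^{|α|+|β|-2}` from shrinking the radius `r'` to `r`, with `δ = r/r'`. -/
def degDamping (δ : ℝ) (q : MIdx × MIdx) : ℝ≥0∞ :=
  ENNReal.ofReal (δ ^ ((deg q.1 : ℤ) + deg q.2 - 2))

lemma IsHam.weightedTerm_mul_deg_mul_degDamping_le {H : MIdx → MIdx → ℂ} (hH : IsHam H)
    {σ : MIdx × MIdx → MIdx} (hσ : σ = Prod.fst ∨ σ = Prod.snd) {δ : ℝ} (h0 : 0 ≤ δ)
    (h1 : δ < 1) (c : ℤ → MIdx → MIdx → ℝ) (j : ℤ) (q : MIdx × MIdx) :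
    weightedTerm c H Prod.snd j q * deg (σ q) * degDamping δ q ≤
      ENNReal.ofReal (1 - δ)⁻¹ * weightedTerm c H Prod.snd j q := by
  by_cases hq : H q.1 q.2 = 0
  · simp [weightedTerm, hq]
  have hdeg := hH.deg_eq hq
  have hσdeg : deg (σ q) = deg q.1 := by rcases hσ with rfl | rfl <;> simp [hdeg]
  rw [mul_assoc, mul_comm]
  gcongr
  rw [degDamping, ← ENNReal.ofReal_natCast, ← ENNReal.ofReal_mul (Nat.cast_nonneg _), hσdeg,
    ← hdeg]
  exact ENNReal.ofReal_le_ofReal (natCast_mul_zpow_le h0 h1 _)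

def chainTerm (c : ℤ → MIdx → MIdx → ℝ) (δ : ℝ) (F G : MIdx → MIdx → ℂ)
    (σ τ : MIdx × MIdx → MIdx) (j m : ℤ) (qF qG : MIdx × MIdx) : ℝ≥0∞ :=
  weightedTerm c F Prod.snd j qF * (σ qF m : ℝ≥0∞) * degDamping δ qF * weightedTerm c G τ m qG

section Chain

variable {θ p a r s η δ : ℝ} {F G : MIdx → MIdx → ℂ} {σ τ : MIdx × MIdx → MIdx}

/-- Summing over `m` turns the weight `σ(α,β)_m` into the degree `|α| = |β|`, which the
damping `δ^{2|α|-2}` absorbs at the price `(1-δ)⁻¹`. -/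
lemma tsum_chainTerm_le (hr : 0 < r) (hF : IsHam F) (hG : IsHam G)
    (hσ : σ = Prod.fst ∨ σ = Prod.snd) (hτ : τ = Prod.fst ∨ τ = Prod.snd)
    (h0 : 0 ≤ δ) (h1 : δ < 1) (j : ℤ) :
    ∑' t : ℤ × (MIdx × MIdx) × (MIdx × MIdx),
        chainTerm (cwt θ p a r s η) δ F G σ τ j t.1 t.2.1 t.2.2 ≤
      ENNReal.ofReal (1 - δ)⁻¹ * hnorm θ p a r s η F * hnorm θ p a r s η G := by
  set c := cwt θ p a r s η
  calc ∑' t : ℤ × (MIdx × MIdx) × (MIdx × MIdx), chainTerm c δ F G σ τ j t.1 t.2.1 t.2.2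
      = ∑' (m : ℤ) (qF : MIdx × MIdx) (qG : MIdx × MIdx), chainTerm c δ F G σ τ j m qF qG := by
        rw [ENNReal.tsum_prod']
        exact tsum_congr fun m => ENNReal.tsum_prod'
    _ ≤ ∑' (m : ℤ) (qF : MIdx × MIdx),
          weightedTerm c F Prod.snd j qF * (σ qF m : ℝ≥0∞) * degDamping δ qF *
            hnorm θ p a r s η G := by
        gcongr with m qF
        simp only [chainTerm, ENNReal.tsum_mul_left]
        gcongr
        exact hG.tsum_weightedTerm_le_hnorm hr hτ m
    _ = (∑' qF, weightedTerm c F Prod.snd j qF * deg (σ qF) * degDamping δ qF) *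
          hnorm θ p a r s η G := by
        rw [ENNReal.tsum_comm, ← ENNReal.tsum_mul_right]
        refine tsum_congr fun qF => ?_
        rw [ENNReal.tsum_mul_right, ENNReal.tsum_mul_right, ENNReal.tsum_mul_left,
          tsum_natCast_apply]
    _ ≤ (∑' qF, ENNReal.ofReal (1 - δ)⁻¹ * weightedTerm c F Prod.snd j qF) *
          hnorm θ p a r s η G := by
        gcongr ?_ * _
        exact ENNReal.tsum_le_tsum fun qF =>
          hF.weightedTerm_mul_deg_mul_degDamping_le hσ h0 h1 c j qF
    _ ≤ _ := by
        rw [ENNReal.tsum_mul_left]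
        gcongr
        exact tsum_weightedTerm_snd_le_hnorm F j

end Chain

/-- Bound for the contribution of `t = (m, (α,β), (α',β'))` to the `j`-th sum of the norm of
`{F,G}`: its coefficient is at most `(α_m β'_m + β_m α'_m) |F_{αβ}| |G_{α'β'}|`, and
`B_j ≤ β_j + β'_j`. -/
def bracketMajorant (c : ℤ → MIdx → MIdx → ℝ) (δ : ℝ) (F G : MIdx → MIdx → ℂ) (j : ℤ)
    (t : ℤ × (MIdx × MIdx) × (MIdx × MIdx)) : ℝ≥0∞ :=
  chainTerm c δ F G Prod.fst Prod.snd j t.1 t.2.1 t.2.2 +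
    chainTerm c δ F G Prod.snd Prod.fst j t.1 t.2.1 t.2.2 +
    chainTerm c δ G F Prod.snd Prod.fst j t.1 t.2.2 t.2.1 +
    chainTerm c δ G F Prod.fst Prod.snd j t.1 t.2.2 t.2.1

def bracketTerm (F G : MIdx → MIdx → ℂ) (A B : MIdx) (t : ℤ × (MIdx × MIdx) × (MIdx × MIdx)) :
    ℂ :=
  if t.2.1.1 + t.2.2.1 = A + single t.1 1 ∧ t.2.1.2 + t.2.2.2 = B + single t.1 1 then
    Complex.I * ((t.2.1.1 t.1 : ℂ) * (t.2.2.2 t.1 : ℂ) - (t.2.1.2 t.1 : ℂ) * (t.2.2.1 t.1 : ℂ)) *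
      F t.2.1.1 t.2.1.2 * G t.2.2.1 t.2.2.2
  else 0

lemma pois_eq_tsum_bracketTerm (F G : MIdx → MIdx → ℂ) (A B : MIdx) :
    pois F G A B = ∑' t, bracketTerm F G A B t := rfl

lemma enorm_bracketCoeff_le (x y u v : ℕ) (z w : ℂ) :
    ‖Complex.I * ((x : ℂ) * y - u * v) * z * w‖ₑ ≤ ((x : ℝ≥0∞) * y + u * v) * ‖z‖ₑ * ‖w‖ₑ := by
  have hxyuv : ‖(x : ℂ) * y - u * v‖ₑ ≤ (x : ℝ≥0∞) * y + u * v :=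
    enorm_sub_le.trans (by simp [← ofReal_norm])
  have hI : ‖Complex.I‖ₑ = 1 := by simp [← ofReal_norm]
  rw [enorm_mul, enorm_mul, enorm_mul, hI, one_mul]
  gcongr

section Bracket

variable {θ p a r r' s η : ℝ} {F G : MIdx → MIdx → ℂ}

lemma tsum_bracketMajorant_le (hr' : 0 < r') (hF : IsHam F) (hG : IsHam G) {δ : ℝ}
    (h0 : 0 ≤ δ) (h1 : δ < 1) (j : ℤ) :
    ∑' t, bracketMajorant (cwt θ p a r' s η) δ F G j t ≤
      ENNReal.ofReal (4 * (1 - δ)⁻¹) * hnorm θ p a r' s η F * hnorm θ p a r' s η G := by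
  set c := cwt θ p a r' s η
  have hswap : ∀ σ τ, ∑' t : ℤ × (MIdx × MIdx) × (MIdx × MIdx),
      chainTerm c δ G F σ τ j t.1 t.2.2 t.2.1 =
        ∑' t : ℤ × (MIdx × MIdx) × (MIdx × MIdx), chainTerm c δ G F σ τ j t.1 t.2.1 t.2.2 :=
    fun σ τ => (Equiv.prodCongr (Equiv.refl ℤ) (Equiv.prodComm _ _)).tsum_eq
      fun t => chainTerm c δ G F σ τ j t.1 t.2.1 t.2.2
  simp only [bracketMajorant, ENNReal.tsum_add, hswap]
  calc _ ≤ ENNReal.ofReal (1 - δ)⁻¹ * hnorm θ p a r' s η F * hnorm θ p a r' s η G +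
        ENNReal.ofReal (1 - δ)⁻¹ * hnorm θ p a r' s η F * hnorm θ p a r' s η G +
        ENNReal.ofReal (1 - δ)⁻¹ * hnorm θ p a r' s η G * hnorm θ p a r' s η F +
        ENNReal.ofReal (1 - δ)⁻¹ * hnorm θ p a r' s η G * hnorm θ p a r' s η F := by
        gcongr
        exacts [tsum_chainTerm_le hr' hF hG (Or.inl rfl) (Or.inr rfl) h0 h1 j,
          tsum_chainTerm_le hr' hF hG (Or.inr rfl) (Or.inl rfl) h0 h1 j,
          tsum_chainTerm_le hr' hG hF (Or.inr rfl) (Or.inl rfl) h0 h1 j,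
          tsum_chainTerm_le hr' hG hF (Or.inl rfl) (Or.inr rfl) h0 h1 j]
    _ = _ := by
        rw [ENNReal.ofReal_mul zero_le_four, ENNReal.ofReal_ofNat]
        ring

/-- Mass conservation and the weight `n` force `|α'| + |β'| ≥ 2` wherever the left side is
nonzero, so the `G`-factor loses nothing in passing to the radius `r'`. -/
lemma IsHam.enorm_mul_ofReal_cwt_le (hr : 0 < r) (hrr' : r ≤ r') (hη : 0 ≤ η) (hG : IsHam G)
    {j m : ℤ} {A B α β α' β' : MIdx}
    (hA : α + α' = A + single m 1) (hB : β + β' = B + single m 1)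
    {n : ℕ} (hn : n ≠ 0 → α' m ≠ 0 ∨ β' m ≠ 0) :
    ‖G α' β'‖ₑ * n * ENNReal.ofReal (cwt θ p a r s η j A B) ≤
      ‖G α' β'‖ₑ * n * (degDamping (r / r') (α, β) * ENNReal.ofReal (cwt θ p a r' s η j α β) *
        ENNReal.ofReal (cwt θ p a r' s η m α' β')) := by
  by_cases hGz : G α' β' = 0
  · simp [hGz]
  by_cases hnz : n = 0
  · simp [hnz]
  gcongr
  have hr' : 0 < r' := hr.trans_le hrr'
  rw [degDamping, ← ENNReal.ofReal_mul (zpow_nonneg (div_pos hr hr').le _),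
    ← ENNReal.ofReal_mul (mul_nonneg (zpow_nonneg (div_pos hr hr').le _)
      (cwt_pos hr' j α β).le)]
  exact ENNReal.ofReal_le_ofReal
    (cwt_le_zpow_mul_of_add_eq hr hrr' hη hA hB (hG.two_le_deg_add_deg hGz (hn hnz)))

lemma enorm_bracketCoeff_mul_le (hr : 0 < r) (hrr' : r ≤ r') (hη : 0 ≤ η)
    (hF : IsHam F) (hG : IsHam G) {j m : ℤ} {A B α β α' β' : MIdx}
    (hA : α + α' = A + single m 1) (hB : β + β' = B + single m 1) :
    ‖Complex.I * ((α m : ℂ) * (β' m : ℂ) - (β m : ℂ) * (α' m : ℂ)) * F α β * G α' β'‖ₑ *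
        (B j : ℝ≥0∞) * ENNReal.ofReal (cwt θ p a r s η j A B) ≤
      bracketMajorant (cwt θ p a r' s η) (r / r') F G j (m, (α, β), (α', β')) := by
  have hBj : (B j : ℝ≥0∞) ≤ β j + β' j := by
    have := congrArg (· j) hB
    simp only [coe_add, Pi.add_apply, single_apply] at this
    exact_mod_cast (by omega : B j ≤ β j + β' j)
  have hA' : α' + α = A + single m 1 := by rw [add_comm, hA]
  have hB' : β' + β = B + single m 1 := by rw [add_comm, hB]
  set c := ENNReal.ofReal (cwt θ p a r s η j A B)
  calc _ ≤ ((α m : ℝ≥0∞) * β' m + β m * α' m) * ‖F α β‖ₑ * ‖G α' β'‖ₑ * (β j + β' j) * c := by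
        gcongr
        exact enorm_bracketCoeff_le _ _ _ _ _ _
    _ = ‖F α β‖ₑ * β j * α m * (‖G α' β'‖ₑ * β' m * c) +
          ‖F α β‖ₑ * β j * β m * (‖G α' β'‖ₑ * α' m * c) +
          ‖G α' β'‖ₑ * β' j * β' m * (‖F α β‖ₑ * α m * c) +
          ‖G α' β'‖ₑ * β' j * α' m * (‖F α β‖ₑ * β m * c) := by ring
    _ ≤ _ := by
        refine (add_le_add (add_le_add (add_le_add
          (mul_le_mul_right (hG.enorm_mul_ofReal_cwt_le hr hrr' hη hA hB (n := β' m) Or.inr) _)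
          (mul_le_mul_right (hG.enorm_mul_ofReal_cwt_le hr hrr' hη hA hB (n := α' m) Or.inl) _))
          (mul_le_mul_right (hF.enorm_mul_ofReal_cwt_le hr hrr' hη hA' hB' (n := α m) Or.inl) _))
          (mul_le_mul_right (hF.enorm_mul_ofReal_cwt_le hr hrr' hη hA' hB' (n := β m) Or.inr)
            _)).trans_eq ?_
        simp only [bracketMajorant, chainTerm, weightedTerm]
        ring

end Bracket

section Estimate

variable {θ p a r r' s η : ℝ} {F G : MIdx → MIdx → ℂ}

/-- Each `t = (m, (α,β), (α',β'))` contributes to the single coefficient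
`(A, B) = (α + α' - e_m, β + β' - e_m)`. -/
lemma tsum_enorm_bracketTerm_mul_le (hr : 0 < r) (hrr' : r ≤ r') (hη : 0 ≤ η)
    (hF : IsHam F) (hG : IsHam G) (j : ℤ) (t : ℤ × (MIdx × MIdx) × (MIdx × MIdx)) :
    ∑' q : MIdx × MIdx, ‖bracketTerm F G q.1 q.2 t‖ₑ *
        ((q.2 j : ℝ≥0∞) * ENNReal.ofReal (cwt θ p a r s η j q.1 q.2)) ≤
      bracketMajorant (cwt θ p a r' s η) (r / r') F G j t := by
  obtain ⟨m, ⟨α, β⟩, ⟨α', β'⟩⟩ := t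
  calc _ ≤ ∑' q : MIdx × MIdx, if q = (α + α' - single m 1, β + β' - single m 1) then
          bracketMajorant (cwt θ p a r' s η) (r / r') F G j (m, (α, β), (α', β')) else 0 := by
        refine ENNReal.tsum_le_tsum fun q => ?_
        unfold bracketTerm
        split_ifs with hc hq
        · rw [← mul_assoc]
          exact enorm_bracketCoeff_mul_le hr hrr' hη hF hG hc.1 hc.2
        · exact absurd (Prod.ext (by simp [hc.1]) (by simp [hc.2])) hq
        all_goals simp
    _ = _ := tsum_ite_eq _ _

lemma tsum_tsum_enorm_bracketTerm_le (hr : 0 < r) (hrr' : r < r') (hη : 0 ≤ η)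
    (hF : IsHam F) (hG : IsHam G) (j : ℤ) :
    ∑' (q : MIdx × MIdx) (t : ℤ × (MIdx × MIdx) × (MIdx × MIdx)),
        ‖bracketTerm F G q.1 q.2 t‖ₑ * ((q.2 j : ℝ≥0∞) * ENNReal.ofReal (cwt θ p a r s η j q.1 q.2)) ≤
      ENNReal.ofReal (4 * (1 - r / r')⁻¹) * hnorm θ p a r' s η F * hnorm θ p a r' s η G := by
  have hr' : 0 < r' := hr.trans hrr'
  rw [ENNReal.tsum_comm]
  exact (ENNReal.tsum_le_tsum fun t => tsum_enorm_bracketTerm_mul_le hr hrr'.le hη hF hG j t).trans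
    (tsum_bracketMajorant_le hr' hF hG (div_pos hr hr').le ((div_lt_one hr').2 hrr') j)

lemma hnorm_pois_le (hr : 0 < r) (hrr' : r < r') (hη : 0 ≤ η) (hF : IsHam F) (hG : IsHam G) :
    hnorm θ p a r s η (pois F G) ≤
      ENNReal.ofReal (4 * (1 - r / r')⁻¹) * hnorm θ p a r' s η F * hnorm θ p a r' s η G := by
  rw [hnorm_eq_iSup_tsum_weightedTerm]
  refine iSup_le fun j => le_trans (ENNReal.tsum_le_tsum fun q => ?_)
    (tsum_tsum_enorm_bracketTerm_le hr hrr' hη hF hG j)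
  rw [weightedTerm, mul_assoc, ENNReal.tsum_mul_right, pois_eq_tsum_bracketTerm]
  gcongr
  exact enorm_tsum_le_tsum_enorm

/-- The bound comes from a weight `B_j > 0`; the coefficients with `B = 0` are invisible to
every norm. -/
lemma summable_bracketTerm (hr : 0 < r) (hrr' : r < r') (hη : 0 ≤ η)
    (hF : IsHam F) (hG : IsHam G) (hF' : hnorm θ p a r' s η F ≠ ⊤)
    (hG' : hnorm θ p a r' s η G ≠ ⊤) {A B : MIdx} (hB : B ≠ 0) :
    Summable (bracketTerm F G A B) := by
  obtain ⟨j, hj⟩ := Finsupp.ne_iff.1 hB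
  have hw : (B j : ℝ≥0∞) * ENNReal.ofReal (cwt θ p a r s η j A B) ≠ 0 :=
    mul_ne_zero (by exact_mod_cast hj) (ENNReal.ofReal_pos.2 (cwt_pos hr j A B)).ne'
  have hle : (∑' t, ‖bracketTerm F G A B t‖ₑ) *
      ((B j : ℝ≥0∞) * ENNReal.ofReal (cwt θ p a r s η j A B)) ≤
      ENNReal.ofReal (4 * (1 - r / r')⁻¹) * hnorm θ p a r' s η F * hnorm θ p a r' s η G := by
    rw [← ENNReal.tsum_mul_right]
    exact (ENNReal.le_tsum (f := fun q : MIdx × MIdx => ∑' t, ‖bracketTerm F G q.1 q.2 t‖ₑ *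
      ((q.2 j : ℝ≥0∞) * ENNReal.ofReal (cwt θ p a r s η j q.1 q.2))) (A, B)).trans
      (tsum_tsum_enorm_bracketTerm_le hr hrr' hη hF hG j)
  refine Summable.of_enorm fun htop => ?_
  rw [htop, ENNReal.top_mul hw, top_le_iff] at hle
  exact ENNReal.mul_ne_top (ENNReal.mul_ne_top ENNReal.ofReal_ne_top hF') hG' hle

lemma pois_sub_pois {F' G' : MIdx → MIdx → ℂ} {A B : MIdx}
    (h : Summable (bracketTerm F G A B)) (h' : Summable (bracketTerm F' G' A B))
    (hΔF : Summable (bracketTerm (fun α β => F α β - F' α β) G A B))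
    (hΔG : Summable (bracketTerm F' (fun α β => G α β - G' α β) A B)) :
    pois F G A B - pois F' G' A B =
      pois (fun α β => F α β - F' α β) G A B + pois F' (fun α β => G α β - G' α β) A B := by
  simp only [pois_eq_tsum_bracketTerm]
  rw [← h.tsum_sub h', ← hΔF.tsum_add hΔG]
  refine tsum_congr fun t => ?_
  unfold bracketTerm
  split_ifs <;> ring

lemma hnorm_pois_sub_pois_le (hr : 0 < r) (hrr' : r < r') (hη : 0 ≤ η) {F' G' : MIdx → MIdx → ℂ}
    (hF : IsHam F) (hG : IsHam G) (hF' : IsHam F') (hG' : IsHam G')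
    (hFt : hnorm θ p a r' s η F ≠ ⊤) (hGt : hnorm θ p a r' s η G ≠ ⊤)
    (hF't : hnorm θ p a r' s η F' ≠ ⊤) (hG't : hnorm θ p a r' s η G' ≠ ⊤) :
    hnorm θ p a r s η (fun A B => pois F G A B - pois F' G' A B) ≤
      ENNReal.ofReal (4 * (1 - r / r')⁻¹) *
          hnorm θ p a r' s η (fun α β => F α β - F' α β) * hnorm θ p a r' s η G +
        ENNReal.ofReal (4 * (1 - r / r')⁻¹) * hnorm θ p a r' s η F' *
          hnorm θ p a r' s η (fun α β => G α β - G' α β) := by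
  have hΔFt : hnorm θ p a r' s η (fun α β => F α β - F' α β) ≠ ⊤ :=
    ne_top_of_le_ne_top (ENNReal.add_ne_top.2 ⟨hFt, hF't⟩)
      (hnorm_le_add_of_enorm_le fun _ _ _ => enorm_sub_le)
  have hΔGt : hnorm θ p a r' s η (fun α β => G α β - G' α β) ≠ ⊤ :=
    ne_top_of_le_ne_top (ENNReal.add_ne_top.2 ⟨hGt, hG't⟩)
      (hnorm_le_add_of_enorm_le fun _ _ _ => enorm_sub_le)
  calc _ ≤ hnorm θ p a r s η (pois (fun α β => F α β - F' α β) G) +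
        hnorm θ p a r s η (pois F' fun α β => G α β - G' α β) := by
        refine hnorm_le_add_of_enorm_le fun A B hB => ?_
        rw [pois_sub_pois (summable_bracketTerm hr hrr' hη hF hG hFt hGt hB)
          (summable_bracketTerm hr hrr' hη hF' hG' hF't hG't hB)
          (summable_bracketTerm hr hrr' hη (hF.sub hF') hG hΔFt hGt hB)
          (summable_bracketTerm hr hrr' hη hF' (hG.sub hG') hF't hΔGt hB)]
        exact enorm_add_le _ _
    _ ≤ _ := add_le_add (hnorm_pois_le hr hrr' hη (hF.sub hF') hG)
        (hnorm_pois_le hr hrr' hη hF' (hG.sub hG'))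

end Estimate

/-- Leibniz rule for weighted Lipschitz norms `sup_ω n(ω) + c sup_{ω,ω'} d(ω,ω') / dist(ω,ω')`. -/
lemma iSup_add_mul_iSup_div_le {ι : Type*} {D : Set ι} {dist : ι → ι → ℝ≥0∞} {c C : ℝ≥0∞}
    {nF nG nP : ι → ℝ≥0∞} {dF dG dP : ι → ι → ℝ≥0∞}
    (hP : ∀ ω ∈ D, nP ω ≤ C * nF ω * nG ω)
    (hdP : ∀ ω ∈ D, ∀ ω' ∈ D, dP ω ω' ≤ C * dF ω ω' * nG ω + C * nF ω' * dG ω ω') :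
    (⨆ ω ∈ D, nP ω) + c * ⨆ ω ∈ D, ⨆ ω' ∈ D, dP ω ω' / dist ω ω' ≤
      C * ((⨆ ω ∈ D, nF ω) + c * ⨆ ω ∈ D, ⨆ ω' ∈ D, dF ω ω' / dist ω ω') *
        ((⨆ ω ∈ D, nG ω) + c * ⨆ ω ∈ D, ⨆ ω' ∈ D, dG ω ω' / dist ω ω') := by
  set SF := ⨆ ω ∈ D, nF ω
  set SG := ⨆ ω ∈ D, nG ω
  set LF := ⨆ ω ∈ D, ⨆ ω' ∈ D, dF ω ω' / dist ω ω'
  set LG := ⨆ ω ∈ D, ⨆ ω' ∈ D, dG ω ω' / dist ω ω'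
  have hnF : ∀ ω ∈ D, nF ω ≤ SF := fun ω hω => le_iSup₂_of_le ω hω le_rfl
  have hnG : ∀ ω ∈ D, nG ω ≤ SG := fun ω hω => le_iSup₂_of_le ω hω le_rfl
  have hsup : (⨆ ω ∈ D, nP ω) ≤ C * SF * SG :=
    iSup₂_le fun ω hω => (hP ω hω).trans (by gcongr <;> exact le_iSup₂_of_le ω hω le_rfl)
  have hlip : (⨆ ω ∈ D, ⨆ ω' ∈ D, dP ω ω' / dist ω ω') ≤ C * LF * SG + C * SF * LG := by
    refine iSup₂_le fun ω hω => iSup₂_le fun ω' hω' => ?_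
    calc dP ω ω' / dist ω ω' ≤ (C * dF ω ω' * nG ω + C * nF ω' * dG ω ω') / dist ω ω' := by
          gcongr
          exact hdP ω hω ω' hω'
      _ = C * (dF ω ω' / dist ω ω') * nG ω + C * nF ω' * (dG ω ω' / dist ω ω') := by
          rw [ENNReal.add_div]
          simp only [div_eq_mul_inv]
          ring
      _ ≤ C * LF * SG + C * SF * LG := by
          gcongr
          · exact le_iSup₂_of_le ω hω (le_iSup₂_of_le ω' hω' le_rfl)
          · exact hnG ω hω
          · exact hnF ω' hω'
          · exact le_iSup₂_of_le ω hω (le_iSup₂_of_le ω' hω' le_rfl)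
  calc _ ≤ C * SF * SG + c * (C * LF * SG + C * SF * LG) := by gcongr
    _ ≤ C * SF * SG + c * (C * LF * SG + C * SF * LG) + C * (c * LF) * (c * LG) := le_self_add
    _ = _ := by ring

lemma hnorm_le_hnormLip {γ θ p a r s η : ℝ} {H : (ℤ → ℝ) → MIdx → MIdx → ℂ} {ω : ℤ → ℝ}
    (hω : ω ∈ Dio γ) : hnorm θ p a r s η (H ω) ≤ hnormLip γ θ p a r s η H := by
  unfold hnormLip
  exact (le_iSup₂_of_le (f := fun ω _ => hnorm θ p a r s η (H ω)) ω hω le_rfl).trans le_self_add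

lemma four_mul_inv_one_sub_div_le {r ρ : ℝ} (hr : 0 < r) (hρ : 0 < ρ) :
    4 * (1 - r / (r + ρ))⁻¹ ≤ 8 * max 1 (r / ρ) := by
  have : (1 - r / (r + ρ))⁻¹ = 1 + r / ρ := by
    rw [one_sub_div (by positivity), add_sub_cancel_left, inv_div, add_div, div_self hρ.ne',
      add_comm]
  rw [this]
  linarith [le_max_left 1 (r / ρ), le_max_right 1 (r / ρ)]

theorem poisson_bracket_estimate_general
    (θ p a : ℝ)
    (r ρ s η : ℝ) (hr : 0 < r) (hρ : 0 < ρ) (hη : 0 ≤ η) :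
    (∀ F G : MIdx → MIdx → ℂ, IsHam F → IsHam G →
        hnorm θ p a (r + ρ) s η F ≠ ⊤ → hnorm θ p a (r + ρ) s η G ≠ ⊤ →
        hnorm θ p a r s η (pois F G) ≤
          ENNReal.ofReal (8 * max 1 (r / ρ)) *
            hnorm θ p a (r + ρ) s η F * hnorm θ p a (r + ρ) s η G) ∧
    (∀ γ : ℝ, 0 < γ → γ < 1 →
      ∀ F G : (ℤ → ℝ) → MIdx → MIdx → ℂ,
        (∀ ω ∈ Dio γ, IsHam (F ω) ∧ IsHam (G ω)) →
        hnormLip γ θ p a (r + ρ) s η F ≠ ⊤ → hnormLip γ θ p a (r + ρ) s η G ≠ ⊤ →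
        hnormLip γ θ p a r s η (fun ω => pois (F ω) (G ω)) ≤
          ENNReal.ofReal (8 * max 1 (r / ρ)) *
            hnormLip γ θ p a (r + ρ) s η F * hnormLip γ θ p a (r + ρ) s η G) := by
  have hrr' : r < r + ρ := lt_add_of_pos_right r hρ
  have hC : ENNReal.ofReal (4 * (1 - r / (r + ρ))⁻¹) ≤ ENNReal.ofReal (8 * max 1 (r / ρ)) :=
    ENNReal.ofReal_le_ofReal (four_mul_inv_one_sub_div_le hr hρ)
  refine ⟨fun F G hF hG _ _ => (hnorm_pois_le hr hrr' hη hF hG).trans (by gcongr), ?_⟩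
  intro γ _ _ F G hFG hFt hGt
  have hFωt : ∀ ω ∈ Dio γ, hnorm θ p a (r + ρ) s η (F ω) ≠ ⊤ :=
    fun ω hω => ne_top_of_le_ne_top hFt (hnorm_le_hnormLip hω)
  have hGωt : ∀ ω ∈ Dio γ, hnorm θ p a (r + ρ) s η (G ω) ≠ ⊤ :=
    fun ω hω => ne_top_of_le_ne_top hGt (hnorm_le_hnormLip hω)
  calc _ ≤ ENNReal.ofReal (4 * (1 - r / (r + ρ))⁻¹) *
        hnormLip γ θ p a (r + ρ) s η F * hnormLip γ θ p a (r + ρ) s η G :=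
        iSup_add_mul_iSup_div_le
          (fun ω hω => hnorm_pois_le hr hrr' hη (hFG ω hω).1 (hFG ω hω).2)
          (fun ω hω ω' hω' => hnorm_pois_sub_pois_le hr hrr' hη (hFG ω hω).1 (hFG ω hω).2
            (hFG ω' hω').1 (hFG ω' hω').2 (hFωt ω hω) (hGωt ω hω) (hFωt ω' hω') (hGωt ω' hω'))
    _ ≤ _ := by gcongr

/-- Proposition `fan`: for Hamiltonians with
`|F|_{r+ρ,s,η}, |G|_{r+ρ,s,η} < ∞` one has
`|{F,G}|_{r,s,η} ≤ 8 max{1, r/ρ} |F|_{r+ρ,s,η} |G|_{r+ρ,s,η}`, and the analogous estimate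
holds for the weighted Lipschitz norms of Lipschitz families over `D_γ`. -/
theorem poisson_bracket_estimate
    (θ p a : ℝ) (hθ0 : 0 < θ) (hθ1 : θ < 1) (hp : 1 < p) (ha : 0 ≤ a)
    (r ρ s η : ℝ) (hr : 0 < r) (hρ : 0 < ρ) (hs : 0 < s) (hη : 0 ≤ η) :
    (∀ F G : MIdx → MIdx → ℂ, IsHam F → IsHam G →
        hnorm θ p a (r + ρ) s η F ≠ ⊤ → hnorm θ p a (r + ρ) s η G ≠ ⊤ →
        hnorm θ p a r s η (pois F G) ≤
          ENNReal.ofReal (8 * max 1 (r / ρ)) *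
            hnorm θ p a (r + ρ) s η F * hnorm θ p a (r + ρ) s η G) ∧
    (∀ γ : ℝ, 0 < γ → γ < 1 →
      ∀ F G : (ℤ → ℝ) → MIdx → MIdx → ℂ,
        (∀ ω ∈ Dio γ, IsHam (F ω) ∧ IsHam (G ω)) →
        hnormLip γ θ p a (r + ρ) s η F ≠ ⊤ → hnormLip γ θ p a (r + ρ) s η G ≠ ⊤ →
        hnormLip γ θ p a r s η (fun ω => pois (F ω) (G ω)) ≤
          ENNReal.ofReal (8 * max 1 (r / ρ)) *
            hnormLip γ θ p a (r + ρ) s η F * hnormLip γ θ p a (r + ρ) s η G) :=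
  poisson_bracket_estimate_general θ p a r ρ s η hr hρ hη

end
end

section
/- Let m, δ : ℤ → ℕ be finitely supported multi-indices with δ ⪯ m and |δ| = q ≥ 1, and let 0 < κ ≤ κ*. Then Σ_{k ⪯ m−δ} binom(m−δ, k) · (κ*/κ)^{2|k|} · (|k|! · (|m|−|k|−1)!) / |m|! ≤ (1/q) · (κ*/κ)^{2|m|−2q}. -/
open scoped ENNReal BigOperators Classical

noncomputable section

/-- Product of binomial coefficients `binom(m,δ) = ∏_i binom(m_i, δ_i)`. -/
def binomM (m δ : MIdx) : ℕ := ∏ i ∈ m.support, Nat.choose (m i) (δ i)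

/-- `I^ν = ∏_i I_i^{ν_i}`. -/
def Ipow (I : ℤ → ℝ) (ν : MIdx) : ℝ := ∏ i ∈ ν.support, I i ^ ν i

/-- The coefficients of the projection `Π^{2q-2} H` relative to the torus of actions `I`:
writing `(A,B) = (γ+α, γ+β)` with `γ = min(A,B)` and `α, β` with disjoint supports,
`(Π^{2q-2}H)_{A,B} = Σ_{δ ⪰ γ, |δ| = q} Σ_{m ⪰ δ} binom(m,δ) binom(δ,γ) (-1)^{|δ-γ|}
I^{m-γ} H_{m+α, m+β}` if `|γ| ≤ q`, and `0` otherwise. -/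
def projCoef (I : ℤ → ℝ) (q : ℕ) (H : MIdx → MIdx → ℂ) (A B : MIdx) : ℂ :=
  let g : MIdx := A - (A - B)
  let α : MIdx := A - g
  let β : MIdx := B - g
  if deg g ≤ q then
    ∑' dm : MIdx × MIdx,
      (if g ≤ dm.1 ∧ deg dm.1 = q ∧ dm.1 ≤ dm.2 then
        ((-1 : ℂ) ^ (deg dm.1 - deg g)) * (binomM dm.2 dm.1 : ℂ) * (binomM dm.1 g : ℂ) *
          ((Ipow I (dm.2 - g) : ℝ) : ℂ) * H (dm.2 + α) (dm.2 + β)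
      else 0)
  else 0

/-- The constant `c_κ`. -/
def ckap (κ : ℝ) : ℝ := if 1 / 2 < κ ^ 2 then (Real.log ((κ ^ 2)⁻¹))⁻¹ else 2 * κ ^ 2

/-!
Group the multi-indices `k ⪯ M := m - δ` by `l = |k|`. Comparing coefficients of `X ^ l` in
`∏ j, (X + 1) ^ M j = (X + 1) ^ |M|` gives the multi-index Vandermonde identity
`Σ_{|k| = l} binom(M, k) = binom(|M|, l)`, which turns the sum into a one-variable sum over
`l ≤ r := |M|`. Bounding `(κ*/κ)^{2l}` by `(κ*/κ)^{2r}`, what remains is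
`S(r) := Σ_{l ≤ r} r!/(r-l)! · (r+q-l-1)! = (r+q)!/q`, which follows by induction on `r` from
`S(r+1) = (r+q)! + (r+1) S(r)`.
-/

open Finset Polynomial

theorem Finset.sum_finsupp_prod_eq_prod_sum {ι α R : Type*} [Zero α] [CommSemiring R]
    (s : Finset ι) (t : ι → Finset α) (f : ι → α → R) :
    ∑ g ∈ s.finsupp t, ∏ i ∈ s, f i (g i) = ∏ i ∈ s, ∑ a ∈ t i, f i a := by
  rw [prod_sum, Finset.finsupp, sum_map]
  refine sum_congr rfl fun p _ => ?_
  rw [← prod_attach s]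
  refine prod_congr rfl fun i _ => ?_
  simp [Finsupp.indicator_of_mem i.2]

theorem Finsupp.Iic_eq_finsupp {ι : Type*} [DecidableEq ι] (f : ι →₀ ℕ) :
    Iic f = f.support.finsupp fun i => Iic (f i) := by
  ext k
  simp only [mem_Iic, mem_finsupp_iff, Finsupp.le_def]
  refine ⟨fun h => ⟨fun i hi => ?_, fun i _ => h i⟩, fun h i => ?_⟩
  · simp only [Finsupp.mem_support_iff] at hi ⊢
    have := h i
    omega
  · by_cases hi : i ∈ f.support
    · exact h.2 i hi
    · have : k i = 0 := Finsupp.notMem_support_iff.1 fun hk => hi (h.1 hk)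
      omega

theorem deg_eq_degree (α : MIdx) : deg α = α.degree := rfl

theorem sum_Iic_binomM_mul_X_pow (M : MIdx) :
    ∑ k ∈ Iic M, C (binomM M k) * X ^ deg k = (X + 1 : ℕ[X]) ^ deg M := by
  have h_pow (n : ℕ) : (X + 1 : ℕ[X]) ^ n = ∑ j ∈ Iic n, C (n.choose j) * X ^ j := by
    rw [add_pow, ← Nat.range_succ_eq_Iic]
    simp [mul_comm]
  rw [deg_eq_degree, Finsupp.degree_apply, ← prod_pow_eq_pow_sum]
  simp only [h_pow, Finsupp.Iic_eq_finsupp M, ← sum_finsupp_prod_eq_prod_sum]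
  refine sum_congr rfl fun k hk => ?_
  rw [prod_mul_distrib, ← map_prod, prod_pow_eq_pow_sum, binomM, deg_eq_degree,
    Finsupp.degree_apply, sum_subset (mem_finsupp_iff.1 hk).1]
  exact fun i _ => Finsupp.notMem_support_iff.1

theorem sum_binomM_filter_deg_eq (M : MIdx) (l : ℕ) :
    ∑ k ∈ Iic M with deg k = l, binomM M k = (deg M).choose l := by
  have := congrArg (coeff · l) (sum_Iic_binomM_mul_X_pow M)
  simpa [finsetSum_coeff, coeff_C_mul_X_pow, coeff_X_add_one_pow, sum_filter, eq_comm] using this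

theorem sum_Iic_binomM_mul {R : Type*} [CommSemiring R] (M : MIdx) (g : ℕ → R) :
    ∑ k ∈ Iic M, (binomM M k : R) * g (deg k) =
      ∑ l ∈ range (deg M + 1), ((deg M).choose l : R) * g l := by
  rw [← sum_fiberwise_of_maps_to (g := deg) (t := range (deg M + 1))
    fun k hk => mem_range_succ_iff.2 (Finsupp.degree_mono (mem_Iic.1 hk))]
  refine sum_congr rfl fun l _ => ?_
  rw [← sum_binomM_filter_deg_eq, Nat.cast_sum, sum_mul]
  exact sum_congr rfl fun k hk => by rw [(mem_filter.1 hk).2]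

theorem sum_descFactorial_mul_factorial (r p : ℕ) :
    (p + 1) * ∑ l ∈ range (r + 1), r.descFactorial l * (r + p - l).factorial =
      (r + p + 1).factorial := by
  induction r with
  | zero => simp [Nat.factorial_succ]
  | succ r ih =>
    rw [sum_range_succ']
    simp only [Nat.succ_descFactorial_succ, mul_assoc, ← mul_sum]
    have h_shift : ∀ l ∈ range (r + 1), (r + 1 + p - (l + 1)).factorial = (r + p - l).factorial :=
      fun l _ => by congr 1; omega
    rw [sum_congr rfl fun l hl => by rw [h_shift l hl], mul_add, mul_left_comm, ih]
    simp only [Nat.descFactorial_zero, one_mul, Nat.sub_zero, show r + 1 + p = r + p + 1 by omega]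
    rw [Nat.factorial_succ (r + p + 1)]
    ring

theorem sum_choose_mul_pow_mul_factorial_le (r q : ℕ) (hq : 1 ≤ q) {x : ℝ} (hx : 1 ≤ x) :
    ∑ l ∈ range (r + 1), (r.choose l : ℝ) *
        (x ^ (2 * l) * ((l.factorial : ℝ) *
          (((r + q - l - 1).factorial : ℝ) / ((r + q).factorial : ℝ)))) ≤
      1 / (q : ℝ) * x ^ (2 * r) := by
  obtain ⟨p, rfl⟩ : ∃ p, q = p + 1 := ⟨q - 1, by omega⟩
  have h_sum : ∑ l ∈ range (r + 1), (r.descFactorial l : ℝ) * ((r + p - l).factorial : ℝ) =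
      (r + (p + 1)).factorial / (p + 1 : ℝ) := by
    rw [eq_div_iff (by positivity), mul_comm, ← add_assoc]
    exact_mod_cast sum_descFactorial_mul_factorial r p
  calc _ ≤ ∑ l ∈ range (r + 1), x ^ (2 * r) / ((r + (p + 1)).factorial : ℝ) *
        ((r.descFactorial l : ℝ) * ((r + p - l).factorial : ℝ)) := by
        refine sum_le_sum fun l hl => ?_
        have hlr : l ≤ r := mem_range_succ_iff.1 hl
        rw [Nat.descFactorial_eq_factorial_mul_choose, show r + (p + 1) - l - 1 = r + p - l by omega]
        have hc : (0 : ℝ) ≤ r.choose l * l.factorial * (r + p - l).factorial /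
            (r + (p + 1)).factorial := by positivity
        have := mul_le_mul_of_nonneg_left (pow_le_pow_right₀ hx (by omega : 2 * l ≤ 2 * r)) hc
        push_cast
        convert this using 1 <;> ring
    _ = 1 / ((p + 1 : ℕ) : ℝ) * x ^ (2 * r) := by
        rw [← mul_sum, h_sum]
        push_cast
        field_simp

/-- estimate `\eqref{serve}`: for multi-indices `δ ⪯ m` with `|δ| = q ≥ 1`
and `0 < κ ≤ κ*`,
`Σ_{k ⪯ m-δ} binom(m-δ,k) (κ*/κ)^{2|k|} |k|!(|m|-|k|-1)!/|m|! ≤ (1/q)(κ*/κ)^{2|m|-2q}`. -/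
theorem factorial_binomial_sum_bound
    (m δ : MIdx) (q : ℕ) (hq : 1 ≤ q) (hδm : δ ≤ m) (hdeg : deg δ = q)
    (κ κs : ℝ) (hκ0 : 0 < κ) (hκκs : κ ≤ κs) :
    (∑' k : MIdx, if k ≤ m - δ then
        (binomM (m - δ) k : ℝ) * (κs / κ) ^ (2 * deg k) *
          (((deg k).factorial : ℝ) * ((deg m - deg k - 1).factorial : ℝ)) /
            ((deg m).factorial : ℝ)
      else 0) ≤
      (1 / (q : ℝ)) * (κs / κ) ^ (2 * deg m - 2 * q) := by
  set M := m - δ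
  have hdeg_m : deg m = deg M + q := by
    rw [← hdeg, deg_eq_degree, deg_eq_degree, deg_eq_degree, ← map_add, tsub_add_cancel_of_le hδm]
  rw [tsum_eq_sum (s := Iic M) fun k hk => if_neg (mt mem_Iic.2 hk),
    sum_congr rfl fun k hk => if_pos (mem_Iic.1 hk)]
  simp only [mul_assoc, mul_div_assoc, hdeg_m]
  rw [sum_Iic_binomM_mul M fun l => (κs / κ) ^ (2 * l) * ((l.factorial : ℝ) *
      (((deg M + q - l - 1).factorial : ℝ) / ((deg M + q).factorial : ℝ))),
    show 2 * (deg M + q) - 2 * q = 2 * deg M by omega]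
  exact sum_choose_mul_pow_mul_factorial_le _ _ hq ((one_le_div hκ0).mpr hκκs)
end
end

section
/- Let θ ∈ (0,1) and let α, β : ℤ → ℕ be finitely supported multi-indices with |α| = |β|. Then for every j ∈ ℤ with α_j + β_j ≠ 0 one has Σ_{i∈ℤ} ⟨i⟩^θ (α_i + β_i) − 2⟨j⟩^θ + |π(α−β)| ≥ 0, where π(α−β) := Σ_i i(α_i − β_i). -/
open scoped ENNReal BigOperators Classical

noncomputable section

lemma one_le_jb (i : ℤ) : 1 ≤ jb i := le_max_right _ _

lemma jb_nonneg (i : ℤ) : 0 ≤ jb i := zero_le_one.trans (one_le_jb i)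

lemma jb_neg (i : ℤ) : jb (-i) = jb i := by simp [jb]

lemma jb_add_le (x y : ℤ) : jb (x + y) ≤ jb x + jb y := by
  refine max_le ?_ (by linarith [one_le_jb x, one_le_jb y])
  push_cast
  exact (abs_add_le _ _).trans (add_le_add (le_max_left _ _) (le_max_left _ _))

section rpow

variable {θ : ℝ}

lemma jb_rpow_add_le (hθ0 : 0 ≤ θ) (hθ1 : θ ≤ 1) (x y : ℤ) :
    jb (x + y) ^ θ ≤ jb x ^ θ + jb y ^ θ :=
  calc jb (x + y) ^ θ ≤ (jb x + jb y) ^ θ :=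
        Real.rpow_le_rpow (jb_nonneg _) (jb_add_le x y) hθ0
    _ ≤ jb x ^ θ + jb y ^ θ := Real.rpow_add_le_add_rpow (jb_nonneg x) (jb_nonneg y) hθ0 hθ1

lemma jb_rpow_le_abs (hθ1 : θ ≤ 1) {m : ℤ} (hm : m ≠ 0) : jb m ^ θ ≤ |(m : ℝ)| := by
  have hjb : jb m = |(m : ℝ)| := max_eq_left (by exact_mod_cast Int.one_le_abs hm)
  exact hjb ▸ Real.rpow_le_self_of_one_le (one_le_jb m) hθ1

end rpow

section Subadditive

variable {G M : Type*} [AddCommGroup G] [AddCommMonoid M] [PartialOrder M]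
  [IsOrderedAddMonoid M] {f : G → M}

lemma map_add_sum_sub_sum_le (hadd : ∀ x y, f (x + y) ≤ f x + f y) (hneg : ∀ x, f (-x) = f x)
    (x : G) (A B : Multiset G) :
    f (x + B.sum - A.sum) ≤ f x + (B.map f).sum + (A.map f).sum := by
  have h := Multiset.le_sum_nonempty_of_subadditive f hadd (x ::ₘ (B + A.map Neg.neg))
    (Multiset.cons_ne_zero)
  simpa [Multiset.sum_map_neg', Function.comp_def, hneg, sub_eq_add_neg, add_assoc] using h

end Subadditive

/-- Pair `j ∈ A` with some `k ∈ B` (one exists since `card A = card B`): then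
`j = (π + k) + (B - k).sum - (A - j).sum` with `π = A.sum - B.sum`, and subadditivity bounds
`f j` by `f (π + k) + Σ_{B - k} f + Σ_{A - j} f`, where `f (π + k) ≤ |π| + f k`. -/
lemma two_mul_le_sum_map_add_sum_map_add_abs {f : ℤ → ℝ}
    (hadd : ∀ x y, f (x + y) ≤ f x + f y) (hneg : ∀ x, f (-x) = f x)
    (habs : ∀ m ≠ 0, f m ≤ |(m : ℝ)|)
    {A B : Multiset ℤ} (hcard : Multiset.card A = Multiset.card B) {j : ℤ} (hj : j ∈ A) :
    2 * f j ≤ (A.map f).sum + (B.map f).sum + |((A.sum - B.sum : ℤ) : ℝ)| := by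
  obtain ⟨k, hk⟩ : ∃ k, k ∈ B :=
    Multiset.card_pos_iff_exists_mem.mp (hcard ▸ Multiset.card_pos_iff_exists_mem.mpr ⟨j, hj⟩)
  have hhead : f (A.sum - B.sum + k) ≤ |((A.sum - B.sum : ℤ) : ℝ)| + f k := by
    rcases eq_or_ne (A.sum - B.sum) 0 with h | h
    · simp [h]
    · linarith [hadd (A.sum - B.sum) k, habs _ h]
  obtain ⟨A', rfl⟩ := Multiset.exists_cons_of_mem hj
  obtain ⟨B', rfl⟩ := Multiset.exists_cons_of_mem hk
  have hsub := map_add_sum_sub_sum_le hadd hneg ((j ::ₘ A').sum - (k ::ₘ B').sum + k) A' B'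
  simp only [Multiset.sum_cons, Multiset.map_cons] at hsub hhead ⊢
  rw [show j + A'.sum - (k + B'.sum) + k + B'.sum - A'.sum = j by ring] at hsub
  linarith

lemma two_mul_le_sum_map_add_sum_map_add_abs_of_mem_add {f : ℤ → ℝ}
    (hadd : ∀ x y, f (x + y) ≤ f x + f y) (hneg : ∀ x, f (-x) = f x)
    (habs : ∀ m ≠ 0, f m ≤ |(m : ℝ)|)
    {A B : Multiset ℤ} (hcard : Multiset.card A = Multiset.card B) {j : ℤ} (hj : j ∈ A + B) :
    2 * f j ≤ (A.map f).sum + (B.map f).sum + |((A.sum - B.sum : ℤ) : ℝ)| := by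
  rcases Multiset.mem_add.mp hj with hjA | hjB
  · exact two_mul_le_sum_map_add_sum_map_add_abs hadd hneg habs hcard hjA
  · have h := two_mul_le_sum_map_add_sum_map_add_abs hadd hneg habs hcard.symm hjB
    rwa [add_comm ((B.map f).sum), ← abs_neg, ← Int.cast_neg, neg_sub] at h

lemma sum_map_toMultiset_eq_sum_smul {ι M : Type*} [AddCommMonoid M] (α : ι →₀ ℕ)
    (g : ι → M) {S : Finset ι} (hS : α.support ⊆ S) :
    ((Finsupp.toMultiset α).map g).sum = ∑ i ∈ S, α i • g i := by
  rw [Finsupp.toMultiset_map, Finsupp.sum_toMultiset,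
    Finsupp.sum_mapDomain_index (h := fun _ n => n • _) (fun _ => zero_smul ℕ _)
      (fun _ _ _ => add_smul _ _ _),
    Finsupp.sum_of_support_subset α hS (fun i n => n • g i) (fun _ _ => zero_smul ℕ _)]

lemma deg_eq_card_toMultiset (α : MIdx) : deg α = Multiset.card (Finsupp.toMultiset α) := by
  rw [Finsupp.card_toMultiset]; rfl

lemma mom_eq_sum_toMultiset_sub (α β : MIdx) :
    mom α β = (Finsupp.toMultiset α).sum - (Finsupp.toMultiset β).sum := by
  rw [← Multiset.map_id (Finsupp.toMultiset α), ← Multiset.map_id (Finsupp.toMultiset β),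
    sum_map_toMultiset_eq_sum_smul α id Finset.subset_union_left,
    sum_map_toMultiset_eq_sum_smul β id Finset.subset_union_right, mom, ← Finset.sum_sub_distrib]
  simp only [nsmul_eq_mul, id, mul_sub, mul_comm]

/-- inequality (3.20) / `\eqref{stima1}`: if `|α| = |β|` then for every `j`
with `α_j + β_j ≠ 0`, `Σ_i ⟨i⟩^θ (α_i + β_i) - 2⟨j⟩^θ + |π(α-β)| ≥ 0`. -/
theorem weight_nonnegativity
    (θ : ℝ) (hθ0 : 0 < θ) (hθ1 : θ < 1)
    (α β : MIdx) (hdeg : deg α = deg β) (j : ℤ) (hj : α j + β j ≠ 0) :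
    0 ≤ (∑ i ∈ α.support ∪ β.support, ((α i : ℝ) + (β i : ℝ)) * jb i ^ θ)
        - 2 * jb j ^ θ + |(mom α β : ℝ)| := by
  have hmem : j ∈ Finsupp.toMultiset α + Finsupp.toMultiset β := by
    rwa [← Finsupp.toMultiset_add, Finsupp.mem_toMultiset, Finsupp.mem_support_iff]
  have key := two_mul_le_sum_map_add_sum_map_add_abs_of_mem_add
    (jb_rpow_add_le hθ0.le hθ1.le) (fun x => by rw [jb_neg]) (fun m => jb_rpow_le_abs hθ1.le)
    (by rwa [← deg_eq_card_toMultiset, ← deg_eq_card_toMultiset]) hmem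
  rw [sum_map_toMultiset_eq_sum_smul α _ Finset.subset_union_left,
    sum_map_toMultiset_eq_sum_smul β _ Finset.subset_union_right, ← Finset.sum_add_distrib,
    ← mom_eq_sum_toMultiset_sub] at key
  simp only [nsmul_eq_mul, ← add_mul] at key
  linarith

end
end

section
/- Let θ ∈ (0,1) and 0 < σ ≤ 1. For i ∈ ℤ and x ≥ 0 set f_i(x,σ) := −(σ(1−θ)/13)·x·⟨i⟩^{θ/2} + ln(1 + x²⟨i⟩²), and set i♯(σ) := ( (312/(σθ(1−θ))) · ln(156/(σθ(1−θ))) )^{2/θ}. Then for every finitely supported ℓ : ℤ → ℤ one has Σ_{i∈ℤ} f_i(|ℓ_i|, σ) ≤ 21 · i♯(σ) · ln i♯(σ). -/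
/-! Write `c = σ(1-θ)/13`, `M = ⟨i⟩` and `x = |ℓ_i|`. Since `log (1 + x²M²) ≤ 2 log (1 + xM)` and
`log y ≤ y - 1`, each term is at most `2 log (2M / c) ≤ 3 log i♯`, uniformly in `x`. When `M ≥ i♯` the
decay `c x M^{θ/2}` beats the logarithm (`i♯^{θ/2}` is the point past which `1 + log u ≤ σθ(1-θ) u / 52`),
so those terms are nonpositive since `x ≥ 1` on the support. At most `2 i♯ + 1` indices have
`⟨i⟩ ≤ i♯`, which gives `(2 i♯ + 1) · 3 log i♯ ≤ 21 i♯ log i♯`. -/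

open scoped ENNReal BigOperators Classical

noncomputable section

/-- The function `f_i(x,σ) = -(σ(1-θ)/13) x ⟨i⟩^{θ/2} + ln(1 + x²⟨i⟩²)`. -/
def fAux (θ σ : ℝ) (i : ℤ) (x : ℝ) : ℝ :=
  -(σ * (1 - θ) / 13) * x * jb i ^ (θ / 2) + Real.log (1 + x ^ 2 * jb i ^ 2)

/-- The threshold `i♯(σ) = ((312/(σθ(1-θ))) ln(156/(σθ(1-θ))))^{2/θ}`. -/
def iSharp (θ σ : ℝ) : ℝ :=
  (312 / (σ * θ * (1 - θ)) * Real.log (156 / (σ * θ * (1 - θ)))) ^ (2 / θ)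

open Real Finset

lemma neg_mul_add_log_one_add_sq_mul_sq_le {a M x : ℝ} (ha : 0 < a) (haM : a ≤ 2 * M)
    (hx : 0 ≤ x) : -a * x + log (1 + x ^ 2 * M ^ 2) ≤ 2 * log (2 * M / a) := by
  have hM : 0 < M := by linarith
  have hsq : log (1 + x ^ 2 * M ^ 2) ≤ 2 * log (1 + x * M) := by
    calc log (1 + x ^ 2 * M ^ 2) ≤ log ((1 + x * M) ^ 2) :=
          log_le_log (by positivity) (by nlinarith [mul_nonneg hx hM.le])
      _ = 2 * log (1 + x * M) := by rw [log_pow]; norm_num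
  have key := log_le_sub_one_of_pos (show 0 < a * (1 + x * M) / (2 * M) by positivity)
  rw [log_div (by positivity) (by positivity), log_mul ha.ne' (by positivity),
    log_mul two_ne_zero hM.ne'] at key
  rw [log_div (by positivity) ha.ne', log_mul two_ne_zero hM.ne']
  have : a * (1 + x * M) / (2 * M) = a / (2 * M) + a * x / 2 := by field_simp
  have : a / (2 * M) ≤ 1 := (div_le_one (by positivity)).2 haM
  linarith

lemma neg_mul_add_log_one_add_sq_mul_sq_nonpos {a M x : ℝ} (hM : 1 ≤ M) (hx : 1 ≤ x)
    (ha : 2 + 2 * log M ≤ a) : -a * x + log (1 + x ^ 2 * M ^ 2) ≤ 0 := by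
  have hxM : 1 ≤ x * M := one_le_mul_of_one_le_of_one_le hx hM
  have hsq : log (1 + x ^ 2 * M ^ 2) ≤ log 2 + 2 * log x + 2 * log M := by
    calc log (1 + x ^ 2 * M ^ 2) ≤ log (2 * x ^ 2 * M ^ 2) :=
          log_le_log (by positivity) (by nlinarith)
      _ = log 2 + 2 * log x + 2 * log M := by
        rw [log_mul (by positivity) (by positivity), log_mul two_ne_zero (by positivity),
          log_pow, log_pow]
        norm_num
  have hlogx := log_le_sub_one_of_pos (show 0 < x by linarith)
  have hlog2 := log_two_lt_d9
  nlinarith [mul_nonneg (sub_nonneg.2 hx) (log_nonneg hM)]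

lemma one_add_log_le_mul_of_le {ε u : ℝ} (hε0 : 0 < ε) (hε1 : ε ≤ 1)
    (hu : 6 / ε * log (3 / ε) ≤ u) : 1 + log u ≤ ε * u := by
  set L := log (3 / ε)
  have hL : 1 ≤ L := by
    rw [le_log_iff_exp_le (by positivity), le_div_iff₀ hε0]
    nlinarith [exp_one_lt_d9]
  set v := 6 / ε * L
  have hv : 0 < v := by positivity
  have hεv : ε * v = 6 * L := by simp only [v]; field_simp
  have hlogv : log v ≤ 2 * L := by
    have : log v = log 2 + L + log L := by
      rw [show v = 2 * (3 / ε) * L by ring, log_mul (by positivity) (by positivity),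
        log_mul two_ne_zero (by positivity)]
    linarith [log_le_sub_one_of_pos (show 0 < L by linarith), log_two_lt_d9]
  have hlogu : log u ≤ log v + (u / v - 1) := by
    have := log_le_sub_one_of_pos (div_pos (hv.trans_le hu) hv)
    rwa [log_div (hv.trans_le hu).ne' hv.ne', sub_le_iff_le_add'] at this
  have huv : u / v ≤ ε * u / 6 := by
    rw [div_le_div_iff₀ hv (by norm_num)]
    nlinarith [hv.trans_le hu]
  nlinarith

lemma card_filter_jb_le_le (s : Finset ℤ) {R : ℝ} (hR : 0 ≤ R) :
    (#(s.filter fun i => jb i ≤ R) : ℝ) ≤ 2 * R + 1 := by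
  have hsub : s.filter (fun i => jb i ≤ R) ⊆ Icc (-⌊R⌋) ⌊R⌋ := by
    intro i hi
    have habs : |(i : ℝ)| ≤ R := (le_max_left _ _).trans (mem_filter.1 hi).2
    rw [mem_Icc, neg_le, Int.le_floor, Int.le_floor]
    push_cast
    obtain ⟨h₁, h₂⟩ := abs_le.1 habs
    exact ⟨by linarith, h₂⟩
  have hcard : (#(Icc (-⌊R⌋) ⌊R⌋) : ℤ) = 2 * ⌊R⌋ + 1 := by
    rw [Int.card_Icc, Int.toNat_of_nonneg (by linarith [Int.floor_nonneg.2 hR])]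
    ring
  have : (#(s.filter fun i => jb i ≤ R) : ℤ) ≤ 2 * ⌊R⌋ + 1 :=
    hcard ▸ Nat.cast_le.2 (card_le_card hsub)
  have : (#(s.filter fun i => jb i ≤ R) : ℝ) ≤ 2 * ⌊R⌋ + 1 := by exact_mod_cast this
  linarith [Int.floor_le R]

lemma mul_mul_one_sub_mem_Ioc {θ σ : ℝ} (hθ0 : 0 < θ) (hθ1 : θ < 1) (hσ0 : 0 < σ)
    (hσ1 : σ ≤ 1) : σ * θ * (1 - θ) ∈ Set.Ioc 0 1 := by
  have h1θ : 0 < 1 - θ := sub_pos.2 hθ1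
  exact ⟨by positivity, mul_le_one₀ (mul_le_one₀ hσ1 hθ0.le hθ1.le) h1θ.le (by linarith)⟩

lemma one_le_log_156_div {K : ℝ} (hK : K ∈ Set.Ioc 0 1) : 1 ≤ log (156 / K) := by
  rw [le_log_iff_exp_le (div_pos (by norm_num) hK.1), le_div_iff₀ hK.1]
  nlinarith [exp_one_lt_d9, hK.2, mul_le_mul_of_nonneg_left hK.2 (exp_pos 1).le]

lemma two_mul_log_156_div_le_log_iSharp {θ σ : ℝ} (hθ0 : 0 < θ) (hθ1 : θ < 1) (hσ0 : 0 < σ)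
    (hσ1 : σ ≤ 1) : 2 * log (156 / (σ * θ * (1 - θ))) ≤ log (iSharp θ σ) := by
  have hK := mul_mul_one_sub_mem_Ioc hθ0 hθ1 hσ0 hσ1
  set K := σ * θ * (1 - θ)
  set L := log (156 / K)
  have hL := one_le_log_156_div hK
  have hK0 := hK.1
  have hLv : L ≤ log (312 / K * L) := by
    refine log_le_log (by positivity) ?_
    rw [show 312 / K * L = 156 / K * (2 * L) by ring]
    exact le_mul_of_one_le_right (by positivity) (by linarith)
  have hθ2 : 2 ≤ 2 / θ := by rw [le_div_iff₀ hθ0]; linarith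
  rw [iSharp, log_rpow (by positivity)]
  nlinarith

lemma one_le_iSharp {θ σ : ℝ} (hθ0 : 0 < θ) (hθ1 : θ < 1) (hσ0 : 0 < σ) (hσ1 : σ ≤ 1) :
    1 ≤ iSharp θ σ := by
  have hK := mul_mul_one_sub_mem_Ioc hθ0 hθ1 hσ0 hσ1
  refine one_le_rpow (one_le_mul_of_one_le_of_one_le ?_ (one_le_log_156_div hK)) (by positivity)
  rw [le_div_iff₀ hK.1]
  linarith [hK.2]

lemma fAux_eq_neg_mul_add_log (θ σ : ℝ) (i : ℤ) (x : ℝ) :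
    fAux θ σ i x = -(σ * (1 - θ) / 13 * jb i ^ (θ / 2)) * x + log (1 + x ^ 2 * jb i ^ 2) := by
  rw [fAux]; ring

lemma fAux_le_three_mul_log_iSharp {θ σ : ℝ} (hθ0 : 0 < θ) (hθ1 : θ < 1) (hσ0 : 0 < σ)
    (hσ1 : σ ≤ 1) {i : ℤ} (hi : jb i ≤ iSharp θ σ) {x : ℝ} (hx : 0 ≤ x) :
    fAux θ σ i x ≤ 3 * log (iSharp θ σ) := by
  have hK0 := (mul_mul_one_sub_mem_Ioc hθ0 hθ1 hσ0 hσ1).1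
  have hL := two_mul_log_156_div_le_log_iSharp hθ0 hθ1 hσ0 hσ1
  rw [fAux_eq_neg_mul_add_log]
  set K := σ * θ * (1 - θ)
  set c := σ * (1 - θ) / 13
  set M := jb i
  set u := M ^ (θ / 2)
  have h1θ : 0 < 1 - θ := sub_pos.2 hθ1
  have hM : 1 ≤ M := le_max_right _ _
  have hu1 : 1 ≤ u := one_le_rpow hM (by positivity)
  have huM : u ≤ M := by
    simpa using rpow_le_rpow_of_exponent_le hM (show θ / 2 ≤ 1 by linarith)
  have hc : 0 < c := by positivity
  have hc1 : c ≤ 1 := by simp only [c]; nlinarith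
  have hcu : c * u ≤ 2 * M := by nlinarith [mul_le_mul_of_nonneg_right hc1 (zero_le_one.trans hu1)]
  have hratio : 2 * M / (c * u) ≤ 156 / K * M := by
    rw [div_le_iff₀ (by positivity),
      show 156 / K * M * (c * u) = 12 / θ * u * M by simp only [K, c]; field_simp; ring]
    have : 2 ≤ 12 / θ * u := by
      rw [div_mul_eq_mul_div, le_div_iff₀ hθ0]; linarith
    nlinarith
  have hlog := log_le_log (by positivity) hratio
  rw [log_mul (by positivity) (by positivity)] at hlog
  have hlogM := log_le_log (by positivity) hi
  linarith [neg_mul_add_log_one_add_sq_mul_sq_le (by positivity) hcu hx]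

lemma fAux_nonpos_of_iSharp_le_jb {θ σ : ℝ} (hθ0 : 0 < θ) (hθ1 : θ < 1) (hσ0 : 0 < σ)
    (hσ1 : σ ≤ 1) {i : ℤ} (hi : iSharp θ σ ≤ jb i) {x : ℝ} (hx : 1 ≤ x) :
    fAux θ σ i x ≤ 0 := by
  have hK := mul_mul_one_sub_mem_Ioc hθ0 hθ1 hσ0 hσ1
  rw [fAux_eq_neg_mul_add_log]
  set K := σ * θ * (1 - θ)
  set c := σ * (1 - θ) / 13
  set M := jb i
  set u := M ^ (θ / 2)
  have hM : 1 ≤ M := le_max_right _ _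
  have hv : 0 ≤ 312 / K * log (156 / K) :=
    mul_nonneg (div_nonneg (by norm_num) hK.1.le) (zero_le_one.trans (one_le_log_156_div hK))
  -- `i♯^{θ/2}` is the threshold of `one_add_log_le_mul_of_le` at `ε = K / 52`
  have hu : 6 / (K / 52) * log (3 / (K / 52)) ≤ u := by
    calc 6 / (K / 52) * log (3 / (K / 52)) = 312 / K * log (156 / K) := by
          norm_num [div_div_eq_mul_div]
      _ = iSharp θ σ ^ (θ / 2) := by
          rw [iSharp, ← rpow_mul hv, show 2 / θ * (θ / 2) = 1 by field_simp, rpow_one]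
      _ ≤ u := rpow_le_rpow (zero_le_one.trans (one_le_iSharp hθ0 hθ1 hσ0 hσ1)) hi (by positivity)
  have hlog := one_add_log_le_mul_of_le (by linarith [hK.1]) (by linarith [hK.2]) hu
  rw [log_rpow (by linarith)] at hlog
  have hθ2 : 2 ≤ 4 / θ := by rw [le_div_iff₀ hθ0]; linarith
  have ha : 2 + 2 * log M ≤ c * u := by
    have := mul_le_mul_of_nonneg_left hlog (show 0 ≤ 4 / θ by positivity)
    rw [show 4 / θ * (1 + θ / 2 * log M) = 4 / θ + 2 * log M by field_simp; ring,
      show 4 / θ * (K / 52 * u) = c * u by simp only [K, c]; field_simp; ring] at this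
    linarith
  exact neg_mul_add_log_one_add_sq_mul_sq_nonpos hM hx ha

/-- Lemma 4.5 of [BMP]: for `θ ∈ (0,1)`, `0 < σ ≤ 1` and every finitely
supported `ℓ : ℤ → ℤ`, `Σ_i f_i(|ℓ_i|, σ) ≤ 21 i♯(σ) ln i♯(σ)`. -/
theorem fAux_sum_bound
    (θ σ : ℝ) (hθ0 : 0 < θ) (hθ1 : θ < 1) (hσ0 : 0 < σ) (hσ1 : σ ≤ 1)
    (ℓ : ℤ →₀ ℤ) :
    ∑ i ∈ ℓ.support, fAux θ σ i |(ℓ i : ℝ)| ≤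
      21 * iSharp θ σ * Real.log (iSharp θ σ) := by
  set I := iSharp θ σ
  have hI : 1 ≤ I := one_le_iSharp hθ0 hθ1 hσ0 hσ1
  have hlogI : 0 ≤ log I := log_nonneg hI
  have hterm : ∀ i ∈ ℓ.support,
      fAux θ σ i |(ℓ i : ℝ)| ≤ if jb i ≤ I then 3 * log I else 0 := by
    intro i hi
    split_ifs with h
    · exact fAux_le_three_mul_log_iSharp hθ0 hθ1 hσ0 hσ1 h (abs_nonneg _)
    · refine fAux_nonpos_of_iSharp_le_jb hθ0 hθ1 hσ0 hσ1 (not_le.1 h).le ?_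
      exact_mod_cast Int.one_le_abs (Finsupp.mem_support_iff.1 hi)
  calc ∑ i ∈ ℓ.support, fAux θ σ i |(ℓ i : ℝ)|
      ≤ ∑ i ∈ ℓ.support, if jb i ≤ I then 3 * log I else 0 := sum_le_sum hterm
    _ = #(ℓ.support.filter fun i => jb i ≤ I) * (3 * log I) := by
      rw [sum_ite, sum_const_zero, sum_const, nsmul_eq_mul, add_zero]
    _ ≤ (2 * I + 1) * (3 * log I) := by
      gcongr
      exact card_filter_jb_le_le _ (by linarith)
    _ ≤ 21 * I * log I := by nlinarith [mul_nonneg (sub_nonneg.2 hI) hlogI]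

end
end

section
/- There exists a constant C > 0 such that for every γ ∈ (0,1), the product probability measure of the set of ξ ∈ [−1/2,1/2]^ℤ for which the frequency ω(ξ) := (j² + ξ_j)_{j∈ℤ} is NOT γ-Diophantine is at most Cγ. Here ω is γ-Diophantine if |ω·ℓ| := |Σ_j ω_j ℓ_j| > γ ∏_{n∈ℤ}(1 + |ℓ_n|²⟨n⟩²)^{-1} for every finitely supported nonzero ℓ : ℤ → ℤ. -/
open scoped ENNReal BigOperators Classical

noncomputable section

open MeasureTheory

/-- `ω` is `γ`-Diophantine (small-divisor condition):
`|ω·ℓ| > γ ∏_n (1+|ℓ_n|²⟨n⟩²)^{-1}` for every finitely supported nonzero `ℓ`. -/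
def IsDio (γ : ℝ) (ω : ℤ → ℝ) : Prop :=
  ∀ ℓ : ℤ →₀ ℤ, ℓ ≠ 0 →
    γ * ∏ n ∈ ℓ.support, (1 + (ℓ n : ℝ) ^ 2 * jb n ^ 2)⁻¹ <
      |∑ j ∈ ℓ.support, ω j * (ℓ j : ℝ)|


/-! A frequency fails to be `γ`-Diophantine only if `|ω·ℓ| ≤ γ P(ℓ)` for some `ℓ ≠ 0`, where
`P(ℓ) = ∏ₙ (1 + ℓₙ² ⟨n⟩²)⁻¹`. This event involves finitely many coordinates, and integrating out
one coordinate `ξⱼ` with `ℓⱼ ≠ 0` shows that its probability is at most `2γP(ℓ)`, whatever the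
base frequency. A union bound gives the estimate with `C = 2 ∑_ℓ P(ℓ)`, and this sum is finite:
over the `ℓ` supported in a finite set `T` it factorises as
`∏_{n ∈ T} ∑_k (1 + k² ⟨n⟩²)⁻¹ ≤ ∏_{n ∈ T} exp (2ζ(2) ⟨n⟩⁻²) ≤ exp (2ζ(2) ∑ₙ ⟨n⟩⁻²)`. -/

open Finset Function

theorem Finset.sum_prod_finsupp {ι α R : Type*} [Zero α] [CommSemiring R] (s : Finset ι)
    (t : ι → Finset α) (g : ι → α → R) :
    ∑ f ∈ s.finsupp t, ∏ i ∈ s, g i (f i) = ∏ i ∈ s, ∑ a ∈ t i, g i a := by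
  classical
  rw [Finset.finsupp, sum_map, prod_sum]
  refine sum_congr rfl fun p _ => ?_
  rw [← prod_attach s]
  refine prod_congr rfl fun i _ => ?_
  simp [Finsupp.indicator_of_mem i.2]

theorem Finsupp.sum_prod_le_of_forall_prod_sum_le {ι α R : Type*} [Zero α] [CommSemiring R]
    [PartialOrder R] [IsOrderedRing R] {g : ι → α → R}
    (hg_nonneg : ∀ i a, 0 ≤ g i a) (hg_zero : ∀ i, g i 0 = 1) {B : R}
    (hB : ∀ (s : Finset ι) (t : Finset α), ∏ i ∈ s, ∑ a ∈ t, g i a ≤ B)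
    (F : Finset (ι →₀ α)) : ∑ f ∈ F, f.prod g ≤ B := by
  classical
  set s := F.biUnion Finsupp.support
  set t := (F ×ˢ s).image fun p => p.1 p.2
  have hF : F ⊆ s.finsupp fun _ => t := fun f hf =>
    Finset.mem_finsupp_iff.2 ⟨subset_biUnion_of_mem _ hf,
      fun i hi => mem_image.2 ⟨(f, i), mem_product.2 ⟨hf, hi⟩, rfl⟩⟩
  calc ∑ f ∈ F, f.prod g
      ≤ ∑ f ∈ s.finsupp fun _ => t, f.prod g :=
        sum_le_sum_of_subset_of_nonneg hF fun f _ _ => prod_nonneg fun i _ => hg_nonneg _ _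
    _ = ∑ f ∈ s.finsupp fun _ => t, ∏ i ∈ s, g i (f i) :=
        Finset.sum_congr rfl fun f hf =>
          Finsupp.prod_of_support_subset f (Finset.mem_finsupp_iff.1 hf).1 g fun i _ => hg_zero i
    _ = ∏ i ∈ s, ∑ a ∈ t, g i a := Finset.sum_prod_finsupp s _ g
    _ ≤ B := hB s t

theorem summable_inv_int_sq : Summable fun k : ℤ => ((k : ℝ) ^ 2)⁻¹ := by
  simpa only [one_div] using Real.summable_one_div_int_pow.2 one_lt_two

-- Since `((0 : ℝ) ^ 2)⁻¹ = 0`, the series `∑' k : ℤ, ((k : ℝ) ^ 2)⁻¹` is `2ζ(2)`.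
theorem sum_le_one_add_mul_tsum_inv_sq {f : ℤ → ℝ} {c : ℝ} (hc : 0 ≤ c) (h₀ : f 0 ≤ 1)
    (h : ∀ k ≠ 0, f k ≤ c * ((k : ℝ) ^ 2)⁻¹) (K : Finset ℤ) :
    ∑ k ∈ K, f k ≤ 1 + c * ∑' k : ℤ, ((k : ℝ) ^ 2)⁻¹ := by
  have hf : ∀ k, f k ≤ (if k = 0 then 1 else 0) + c * ((k : ℝ) ^ 2)⁻¹ := by
    intro k
    rcases eq_or_ne k 0 with rfl | hk
    · simpa using h₀
    · simpa [hk] using h k hk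
  calc ∑ k ∈ K, f k
      ≤ ∑ k ∈ K, ((if k = 0 then 1 else 0) + c * ((k : ℝ) ^ 2)⁻¹) := sum_le_sum fun k _ => hf k
    _ = (if 0 ∈ K then 1 else 0) + c * ∑ k ∈ K, ((k : ℝ) ^ 2)⁻¹ := by
        rw [sum_add_distrib, sum_ite_eq', mul_sum]
    _ ≤ 1 + c * ∑' k : ℤ, ((k : ℝ) ^ 2)⁻¹ := by
        gcongr
        · split_ifs <;> norm_num
        · exact summable_inv_int_sq.sum_le_tsum K fun k _ => by positivity

theorem jb_pos (n : ℤ) : 0 < jb n := zero_lt_one.trans_le (le_max_right _ _)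

theorem jb_eq_abs {n : ℤ} (hn : n ≠ 0) : jb n = |(n : ℝ)| :=
  max_eq_left (by exact_mod_cast Int.one_le_abs hn)

theorem sum_inv_jb_sq_le (T : Finset ℤ) :
    ∑ n ∈ T, (jb n ^ 2)⁻¹ ≤ 1 + ∑' k : ℤ, ((k : ℝ) ^ 2)⁻¹ := by
  simpa using sum_le_one_add_mul_tsum_inv_sq zero_le_one (by simp [jb])
    (fun n hn => by rw [jb_eq_abs hn, sq_abs, one_mul]) T

def dioWeight (n k : ℤ) : ℝ := (1 + (k : ℝ) ^ 2 * jb n ^ 2)⁻¹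

theorem dioWeight_nonneg (n k : ℤ) : 0 ≤ dioWeight n k := by unfold dioWeight; positivity

theorem dioWeight_zero (n : ℤ) : dioWeight n 0 = 1 := by simp [dioWeight]

theorem sum_dioWeight_le (n : ℤ) (K : Finset ℤ) :
    ∑ k ∈ K, dioWeight n k ≤ Real.exp ((jb n ^ 2)⁻¹ * ∑' k : ℤ, ((k : ℝ) ^ 2)⁻¹) := by
  refine (sum_le_one_add_mul_tsum_inv_sq (c := (jb n ^ 2)⁻¹) (by positivity)
    (dioWeight_zero n).le (fun k hk => ?_) K).trans ?_
  · calc dioWeight n k ≤ ((k : ℝ) ^ 2 * jb n ^ 2)⁻¹ :=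
          inv_anti₀ (by have := jb_pos n; positivity) (le_add_of_nonneg_left zero_le_one)
      _ = (jb n ^ 2)⁻¹ * ((k : ℝ) ^ 2)⁻¹ := by rw [mul_inv, mul_comm]
  · linarith [Real.add_one_le_exp ((jb n ^ 2)⁻¹ * ∑' k : ℤ, ((k : ℝ) ^ 2)⁻¹)]

theorem prod_sum_dioWeight_le (T K : Finset ℤ) :
    ∏ n ∈ T, ∑ k ∈ K, dioWeight n k ≤
      Real.exp ((1 + ∑' k : ℤ, ((k : ℝ) ^ 2)⁻¹) * ∑' k : ℤ, ((k : ℝ) ^ 2)⁻¹) := by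
  calc ∏ n ∈ T, ∑ k ∈ K, dioWeight n k
      ≤ ∏ n ∈ T, Real.exp ((jb n ^ 2)⁻¹ * ∑' k : ℤ, ((k : ℝ) ^ 2)⁻¹) :=
        prod_le_prod (fun n _ => sum_nonneg fun k _ => dioWeight_nonneg n k)
          fun n _ => sum_dioWeight_le n K
    _ = Real.exp ((∑ n ∈ T, (jb n ^ 2)⁻¹) * ∑' k : ℤ, ((k : ℝ) ^ 2)⁻¹) := by
        rw [← Real.exp_sum, sum_mul]
    _ ≤ _ := by
        gcongr
        exact sum_inv_jb_sq_le T

theorem prod_dioWeight_nonneg (ℓ : ℤ →₀ ℤ) : 0 ≤ ℓ.prod dioWeight :=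
  prod_nonneg fun n _ => dioWeight_nonneg n _

theorem tsum_ofReal_prod_dioWeight_le :
    ∑' ℓ : ℤ →₀ ℤ, ENNReal.ofReal (ℓ.prod dioWeight) ≤
      ENNReal.ofReal (Real.exp ((1 + ∑' k : ℤ, ((k : ℝ) ^ 2)⁻¹) * ∑' k : ℤ, ((k : ℝ) ^ 2)⁻¹)) := by
  rw [ENNReal.tsum_eq_iSup_sum]
  refine iSup_le fun F => ?_
  calc ∑ ℓ ∈ F, ENNReal.ofReal (ℓ.prod dioWeight)
      = ENNReal.ofReal (∑ ℓ ∈ F, ℓ.prod dioWeight) :=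
        (ENNReal.ofReal_sum_of_nonneg fun ℓ _ => prod_dioWeight_nonneg ℓ).symm
    _ ≤ _ := ENNReal.ofReal_le_ofReal <| Finsupp.sum_prod_le_of_forall_prod_sum_le
        dioWeight_nonneg dioWeight_zero prod_sum_dioWeight_le F

theorem MeasureTheory.Measure.pi_le_of_forall_slice_le {ι : Type*} [Fintype ι] [DecidableEq ι]
    {X : ι → Type*} [∀ i, MeasurableSpace (X i)] {μ : ∀ i, Measure (X i)}
    [∀ i, IsProbabilityMeasure (μ i)] {s : Set (∀ i, X i)} (hs : MeasurableSet s) (i : ι)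
    {δ : ℝ≥0∞} (h : ∀ x, μ i {t | update x i t ∈ s} ≤ δ) : Measure.pi μ s ≤ δ := by
  have hslice : ∫⋯∫⁻_{i}, s.indicator 1 ∂μ ≤ ∫⋯∫⁻_{i}, (fun _ => δ) ∂μ := by
    intro x
    rw [lmarginal_singleton, lmarginal_singleton, lintegral_const, measure_univ, mul_one]
    calc ∫⁻ t, s.indicator 1 (update x i t) ∂μ i
        = ∫⁻ t, {t | update x i t ∈ s}.indicator 1 t ∂μ i := rfl
      _ = μ i {t | update x i t ∈ s} :=
        lintegral_indicator_one (measurable_update x hs)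
      _ ≤ δ := h x
  calc Measure.pi μ s = ∫⁻ x, s.indicator 1 x ∂Measure.pi μ := (lintegral_indicator_one hs).symm
    _ ≤ ∫⁻ _, δ ∂Measure.pi μ :=
        lintegral_le_of_lmarginal_le {i} (measurable_one.indicator hs) measurable_const hslice
    _ = δ := by rw [lintegral_const, measure_univ, mul_one]

theorem Real.volume_setOf_abs_add_mul_le (b : ℝ) {c : ℝ} (hc : c ≠ 0) (ε : ℝ) :
    volume {t : ℝ | |b + t * c| ≤ ε} = ENNReal.ofReal (2 * (ε / |c|)) := by
  have : {t : ℝ | |b + t * c| ≤ ε} = Metric.closedBall (-b / c) (ε / |c|) := by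
    ext t
    have hmul : (t - -b / c) * c = b + t * c := by field_simp; ring
    rw [Metric.mem_closedBall, Real.dist_eq, le_div_iff₀ (abs_pos.2 hc), ← abs_mul, hmul]
    rfl
  rw [this, Real.volume_closedBall]

theorem MeasureTheory.Measure.pi_setOf_abs_add_sum_mul_le {ι : Type*} [Fintype ι]
    {ν : Measure ℝ} [IsProbabilityMeasure ν] (hν : ν ≤ volume) (b : ℝ) (c : ι → ℝ) {i : ι}
    (hc : c i ≠ 0) (ε : ℝ) :
    Measure.pi (fun _ => ν) {x | |b + ∑ j, c j * x j| ≤ ε} ≤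
      ENNReal.ofReal (2 * (ε / |c i|)) := by
  classical
  refine Measure.pi_le_of_forall_slice_le (measurableSet_le (by fun_prop) measurable_const) i
    fun x => ?_
  have hslice : {t | update x i t ∈ {y : ι → ℝ | |b + ∑ j, c j * y j| ≤ ε}} =
      {t | |(b + ∑ j ∈ univ.erase i, c j * x j) + t * c i| ≤ ε} := by
    ext t
    simp only [Set.mem_ofPred_eq]
    rw [← add_sum_erase _ _ (mem_univ i), update_self,
      Finset.sum_congr rfl fun j hj => by rw [update_of_ne (ne_of_mem_erase hj)]]
    ring_nf
  rw [hslice]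
  exact (hν _).trans (Real.volume_setOf_abs_add_mul_le _ hc ε).le

def centeredUniform : Measure ℝ := volume.restrict (Set.Icc (-(1 : ℝ) / 2) (1 / 2))

instance : IsProbabilityMeasure centeredUniform :=
  ⟨by rw [centeredUniform, Measure.restrict_apply_univ, Real.volume_Icc]; norm_num⟩

theorem centeredUniform_le_volume : centeredUniform ≤ volume := Measure.restrict_le_self

def IsUniformProduct {ι : Type*} (μ : Measure (ι → ℝ)) : Prop :=
  ∀ (S : Finset ι) (A : ι → Set ℝ), (∀ j, MeasurableSet (A j)) →
    μ {ξ | ∀ j ∈ S, ξ j ∈ A j} = ∏ j ∈ S, centeredUniform (A j)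

namespace IsUniformProduct

variable {ι : Type*} {μ : Measure (ι → ℝ)}

theorem map_restrict_eq_pi (hμ : IsUniformProduct μ) (S : Finset ι) :
    μ.map (fun (ξ : ι → ℝ) (i : S) => ξ i) = Measure.pi fun _ => centeredUniform := by
  classical
  refine (Measure.pi_eq fun s hs => ?_).symm
  set A : ι → Set ℝ := fun j => if h : j ∈ S then s ⟨j, h⟩ else Set.univ
  have hA : ∀ j, MeasurableSet (A j) := fun j => by
    by_cases h : j ∈ S <;> simp [A, h, hs]
  have hpre :
      (fun (ξ : ι → ℝ) (i : S) => ξ i) ⁻¹' Set.univ.pi s = {ξ | ∀ j ∈ S, ξ j ∈ A j} := by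
    ext ξ
    simp only [Set.mem_preimage, Set.mem_univ_pi, Set.mem_ofPred_eq, A]
    exact ⟨fun h j hj => by simpa [hj] using h ⟨j, hj⟩, fun h i => by simpa [i.2] using h i i.2⟩
  rw [Measure.map_apply (by fun_prop) (.univ_pi hs), hpre, hμ S A hA, ← prod_coe_sort S]
  refine prod_congr rfl fun i _ => ?_
  simp [A]

theorem measure_abs_sum_le (hμ : IsUniformProduct μ) {ℓ : ι →₀ ℤ} (hℓ : ℓ ≠ 0) (d : ι → ℝ)
    {ε : ℝ} (hε : 0 ≤ ε) :
    μ {ξ | |∑ j ∈ ℓ.support, (d j + ξ j) * ℓ j| ≤ ε} ≤ ENNReal.ofReal (2 * ε) := by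
  obtain ⟨j₀, hj₀⟩ := Finsupp.support_nonempty_iff.2 hℓ
  set S := ℓ.support
  set L : Set (S → ℝ) := {x | |∑ j ∈ S, d j * ℓ j + ∑ i : S, (ℓ i : ℝ) * x i| ≤ ε}
  have hset : {ξ : ι → ℝ | |∑ j ∈ S, (d j + ξ j) * ℓ j| ≤ ε} =
      (fun (ξ : ι → ℝ) (i : S) => ξ i) ⁻¹' L := by
    ext ξ
    simp only [L, Set.mem_preimage, Set.mem_ofPred_eq, ← sum_coe_sort S, ← sum_add_distrib,
      add_mul, mul_comm (ξ _)]
  have hℓj₀ : ℓ j₀ ≠ 0 := Finsupp.mem_support_iff.1 hj₀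
  calc μ {ξ : ι → ℝ | |∑ j ∈ S, (d j + ξ j) * ℓ j| ≤ ε}
      = (Measure.pi fun _ => centeredUniform) L := by
        rw [hset, ← hμ.map_restrict_eq_pi S,
          Measure.map_apply (by fun_prop) (measurableSet_le (by fun_prop) measurable_const)]
    _ ≤ ENNReal.ofReal (2 * (ε / |(ℓ j₀ : ℝ)|)) :=
        Measure.pi_setOf_abs_add_sum_mul_le centeredUniform_le_volume _
          (fun i : S => (ℓ i : ℝ)) (i := ⟨j₀, hj₀⟩) (Int.cast_ne_zero.2 hℓj₀) ε
    _ ≤ ENNReal.ofReal (2 * ε) := by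
        gcongr
        exact div_le_self hε (by exact_mod_cast Int.one_le_abs hℓj₀)

end IsUniformProduct

theorem IsUniformProduct.measure_not_isDio_le {μ : Measure (ℤ → ℝ)}
    (hμ : IsUniformProduct μ) (d : ℤ → ℝ) {γ : ℝ} (hγ : 0 ≤ γ) :
    μ {ξ | ¬ IsDio γ fun j => d j + ξ j} ≤
      ENNReal.ofReal (2 * γ) * ∑' ℓ : ℤ →₀ ℤ, ENNReal.ofReal (ℓ.prod dioWeight) := by
  set B : (ℤ →₀ ℤ) → Set (ℤ → ℝ) := fun ℓ =>
    {ξ | |∑ j ∈ ℓ.support, (d j + ξ j) * ℓ j| ≤ γ * ℓ.prod dioWeight}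
  have hcover : {ξ | ¬ IsDio γ fun j => d j + ξ j} ⊆ ⋃ ℓ : {ℓ : ℤ →₀ ℤ // ℓ ≠ 0}, B ℓ := by
    intro ξ hξ
    simp only [IsDio, not_forall, not_lt] at hξ
    obtain ⟨ℓ, hℓ, hle⟩ := hξ
    exact Set.mem_iUnion.2 ⟨⟨ℓ, hℓ⟩, hle⟩
  calc μ {ξ | ¬ IsDio γ fun j => d j + ξ j}
      ≤ ∑' ℓ : {ℓ : ℤ →₀ ℤ // ℓ ≠ 0}, μ (B ℓ) :=
        (measure_mono hcover).trans (measure_iUnion_le _)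
    _ ≤ ∑' ℓ : {ℓ : ℤ →₀ ℤ // ℓ ≠ 0},
          ENNReal.ofReal (2 * γ) * ENNReal.ofReal (ℓ.1.prod dioWeight) :=
        ENNReal.tsum_le_tsum fun ℓ =>
          (hμ.measure_abs_sum_le ℓ.2 d (mul_nonneg hγ (prod_dioWeight_nonneg ℓ.1))).trans_eq
            (by rw [← mul_assoc, ENNReal.ofReal_mul (by positivity)])
    _ ≤ ENNReal.ofReal (2 * γ) * ∑' ℓ : ℤ →₀ ℤ, ENNReal.ofReal (ℓ.prod dioWeight) := by
        rw [ENNReal.tsum_mul_left]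
        gcongr
        exact ENNReal.tsum_comp_le_tsum_of_injective Subtype.val_injective _

/-- measure estimate `\eqref{misura}`: there is `C > 0` such that for every
`γ ∈ (0,1)` and every probability measure `μ` on `ℝ^ℤ` which is the product of the uniform
probability measures on `[-1/2, 1/2]` (characterized through its finite-dimensional cylinder
marginals), the set of `ξ` for which `ω(ξ) = (j² + ξ_j)_j` is not `γ`-Diophantine has
`μ`-measure at most `Cγ`. -/
theorem diophantine_measure_estimate :
    ∃ C : ℝ, 0 < C ∧
      ∀ γ : ℝ, 0 < γ → γ < 1 →
      ∀ μ : Measure (ℤ → ℝ), IsProbabilityMeasure μ →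
        (∀ (S : Finset ℤ) (A : ℤ → Set ℝ), (∀ j, MeasurableSet (A j)) →
          μ {ξ | ∀ j ∈ S, ξ j ∈ A j} =
            ∏ j ∈ S, volume (A j ∩ Set.Icc (-(1 : ℝ) / 2) (1 / 2))) →
        μ {ξ | ¬ IsDio γ (fun j => (j : ℝ) ^ 2 + ξ j)} ≤ ENNReal.ofReal (C * γ) := by
  set Z := ∑' k : ℤ, ((k : ℝ) ^ 2)⁻¹
  refine ⟨2 * Real.exp ((1 + Z) * Z), by positivity, fun γ hγ _ μ _ hμ => ?_⟩
  have hμ' : IsUniformProduct μ := fun S A hA => by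
    simp only [hμ S A hA, centeredUniform, Measure.restrict_apply (hA _)]
  calc μ {ξ | ¬ IsDio γ fun j => (j : ℝ) ^ 2 + ξ j}
      ≤ ENNReal.ofReal (2 * γ) * ∑' ℓ : ℤ →₀ ℤ, ENNReal.ofReal (ℓ.prod dioWeight) :=
        hμ'.measure_not_isDio_le _ hγ.le
    _ ≤ ENNReal.ofReal (2 * γ) * ENNReal.ofReal (Real.exp ((1 + Z) * Z)) := by
        gcongr
        exact tsum_ofReal_prod_dioWeight_le
    _ = ENNReal.ofReal (2 * Real.exp ((1 + Z) * Z) * γ) := by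
        rw [← ENNReal.ofReal_mul (by positivity)]
        ring_nf

end
end

section
/- (Lipschitz estimate on small divisors.) Let 0 < γ < 1 and let ω, ω' ∈ D_γ. Then for every finitely supported nonzero ℓ : ℤ → ℤ one has | 1/(ω·ℓ) − 1/(ω'·ℓ) | ≤ |ω − ω'|_∞ · γ^{-2} · ∏_{i∈ℤ} (1 + |ℓ_i|²⟨i⟩²)³, where |ω − ω'|_∞ := sup_j |ω_j − ω'_j|. -/
open scoped ENNReal BigOperators Classical

noncomputable section

lemma aux_one_add_sum_le_prod (s : Finset ℤ) (f : ℤ → ℝ) (hf : ∀ i ∈ s, 0 ≤ f i) :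
    1 + ∑ i ∈ s, f i ≤ ∏ i ∈ s, (1 + f i) := by
  classical
  induction s using Finset.induction_on with
  | empty => simp
  | @insert a s ha ih =>
    have hfa : 0 ≤ f a := hf a (Finset.mem_insert_self a s)
    have hsum : 0 ≤ ∑ i ∈ s, f i :=
      Finset.sum_nonneg fun i hi => hf i (Finset.mem_insert_of_mem hi)
    have ih' := ih fun i hi => hf i (Finset.mem_insert_of_mem hi)
    rw [Finset.sum_insert ha, Finset.prod_insert ha]
    nlinarith [mul_nonneg hfa hsum]

/-- Lipschitz estimate on small divisors: for `ω, ω' ∈ D_γ` and any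
finitely supported nonzero `ℓ : ℤ → ℤ`,
`|1/(ω·ℓ) - 1/(ω'·ℓ)| ≤ |ω-ω'|_∞ γ^{-2} ∏_i (1+|ℓ_i|²⟨i⟩²)³`. -/
theorem small_divisor_lipschitz
    (γ : ℝ) (hγ0 : 0 < γ) (hγ1 : γ < 1)
    (ω ω' : ℤ → ℝ) (hω : ω ∈ Dio γ) (hω' : ω' ∈ Dio γ)
    (ℓ : ℤ →₀ ℤ) (hℓ : ℓ ≠ 0) :
    |(∑ j ∈ ℓ.support, ω j * (ℓ j : ℝ))⁻¹ - (∑ j ∈ ℓ.support, ω' j * (ℓ j : ℝ))⁻¹| ≤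
      (⨆ j : ℤ, |ω j - ω' j|) * (γ ^ 2)⁻¹ *
        ∏ i ∈ ℓ.support, (1 + (ℓ i : ℝ) ^ 2 * jb i ^ 2) ^ 3 := by
  classical
  set A := ∑ j ∈ ℓ.support, ω j * (ℓ j : ℝ) with hAdef
  set B := ∑ j ∈ ℓ.support, ω' j * (ℓ j : ℝ) with hBdef
  set P := ∏ i ∈ ℓ.support, (1 + (ℓ i : ℝ) ^ 2 * jb i ^ 2) with hPdef
  have hfac : ∀ i ∈ ℓ.support, (1 : ℝ) ≤ 1 + (ℓ i : ℝ) ^ 2 * jb i ^ 2 := by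
    intro i _
    have h0 : 0 ≤ (ℓ i : ℝ) ^ 2 * jb i ^ 2 := by positivity
    linarith
  have hP1 : (1 : ℝ) ≤ P := by
    have : (∏ _i ∈ ℓ.support, (1:ℝ)) ≤ P :=
      Finset.prod_le_prod (fun i _ => zero_le_one) hfac
    simpa using this
  have hP0 : 0 < P := lt_of_lt_of_le one_pos hP1
  have hinv : (∏ n ∈ ℓ.support, (1 + (ℓ n : ℝ) ^ 2 * jb n ^ 2)⁻¹) = P⁻¹ := by
    rw [hPdef, ← Finset.prod_inv_distrib]
  have hA : γ * P⁻¹ < |A| := by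
    have := hω.2 ℓ hℓ; rwa [hinv] at this
  have hB : γ * P⁻¹ < |B| := by
    have := hω'.2 ℓ hℓ; rwa [hinv] at this
  have hgP : 0 < γ * P⁻¹ := by positivity
  have hA0 : A ≠ 0 := by
    intro h; rw [h, abs_zero] at hA; exact absurd hA (not_lt.2 hgP.le)
  have hB0 : B ≠ 0 := by
    intro h; rw [h, abs_zero] at hB; exact absurd hB (not_lt.2 hgP.le)
  -- the sup
  set M := ⨆ j : ℤ, |ω j - ω' j| with hMdef
  have hbdd : BddAbove (Set.range fun j : ℤ => |ω j - ω' j|) := by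
    refine ⟨1, ?_⟩
    rintro x ⟨j, rfl⟩
    have h1 := hω.1 j
    have h2 := hω'.1 j
    have : |ω j - ω' j| ≤ |ω j - (j : ℝ) ^ 2| + |ω' j - (j : ℝ) ^ 2| := by
      rw [abs_sub_comm (ω' j)]
      calc |ω j - ω' j| = |(ω j - (j:ℝ)^2) + ((j:ℝ)^2 - ω' j)| := by ring_nf
        _ ≤ _ := abs_add_le _ _
    linarith
  have hM : ∀ j : ℤ, |ω j - ω' j| ≤ M := fun j => le_ciSup hbdd j
  have hM0 : 0 ≤ M := le_trans (abs_nonneg _) (hM 0)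
  -- |B - A| ≤ M * P
  have hsumabs : (∑ i ∈ ℓ.support, |(ℓ i : ℝ)|) ≤ P := by
    have h1 : (∑ i ∈ ℓ.support, |(ℓ i : ℝ)|) ≤
        1 + ∑ i ∈ ℓ.support, |(ℓ i : ℝ)| := by linarith
    refine h1.trans ((aux_one_add_sum_le_prod _ _ fun i _ => abs_nonneg _).trans ?_)
    refine Finset.prod_le_prod (fun i _ => by positivity) ?_
    intro i _
    have h2 : |(ℓ i : ℝ)| ≤ (ℓ i : ℝ) ^ 2 := by
      rcases eq_or_ne (ℓ i) 0 with h | h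
      · simp [h]
      · have h3 : (1 : ℝ) ≤ |(ℓ i : ℝ)| := by
          have : (1 : ℤ) ≤ |ℓ i| := Int.one_le_abs h
          calc (1:ℝ) ≤ (|ℓ i| : ℤ) := by exact_mod_cast this
            _ = |(ℓ i : ℝ)| := by push_cast; ring
        nlinarith [abs_nonneg ((ℓ i : ℝ)), sq_abs ((ℓ i : ℝ))]
    have hjb : (1 : ℝ) ≤ jb i ^ 2 := by
      have : (1 : ℝ) ≤ jb i := le_max_right _ _
      nlinarith
    nlinarith [sq_nonneg ((ℓ i : ℝ))]
  have hBA : |B - A| ≤ M * P := by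
    have : B - A = ∑ j ∈ ℓ.support, (ω' j - ω j) * (ℓ j : ℝ) := by
      rw [hAdef, hBdef, ← Finset.sum_sub_distrib]; apply Finset.sum_congr rfl
      intro j _; ring
    rw [this]
    calc |∑ j ∈ ℓ.support, (ω' j - ω j) * (ℓ j : ℝ)|
        ≤ ∑ j ∈ ℓ.support, |(ω' j - ω j) * (ℓ j : ℝ)| := Finset.abs_sum_le_sum_abs _ _
      _ ≤ ∑ j ∈ ℓ.support, M * |(ℓ j : ℝ)| := by
          refine Finset.sum_le_sum fun j _ => ?_
          rw [abs_mul]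
          have := hM j
          rw [abs_sub_comm] at this
          exact mul_le_mul_of_nonneg_right this (abs_nonneg _)
      _ = M * ∑ j ∈ ℓ.support, |(ℓ j : ℝ)| := by rw [Finset.mul_sum]
      _ ≤ M * P := mul_le_mul_of_nonneg_left hsumabs hM0
  -- main estimate
  have key : |A⁻¹ - B⁻¹| ≤ (M * P) / ((γ * P⁻¹) * (γ * P⁻¹)) := by
    rw [inv_sub_inv hA0 hB0, abs_div, abs_mul]
    refine div_le_div₀ (by positivity) hBA (by positivity) ?_
    exact mul_le_mul hA.le hB.le hgP.le (abs_nonneg _)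
  have hcube : (∏ i ∈ ℓ.support, (1 + (ℓ i : ℝ) ^ 2 * jb i ^ 2) ^ 3) = P ^ 3 := by
    rw [hPdef, ← Finset.prod_pow]
  rw [hcube]
  refine key.trans (le_of_eq ?_)
  have hPne : P ≠ 0 := ne_of_gt hP0
  have hγne : γ ≠ 0 := ne_of_gt hγ0
  field_simp

end
end

section
/- The set U := { u ∈ w^∞_{p,s,a} : inf_{j∈ℤ} ⟨j⟩^p e^{a|j|+s⟨j⟩^θ} |u_j| > 0 } is open and dense in w^∞_{p,s,a}. -/
open scoped ENNReal BigOperators Classical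

noncomputable section

/-- Weighted sup norm of a sequence: `|u|_{p,s,a} = sup_j |u_j| ⟨j⟩^p e^{a|j| + s⟨j⟩^θ}`
(with values in `ℝ≥0∞`). -/
def wnorm (θ p s a : ℝ) (u : ℤ → ℂ) : ℝ≥0∞ :=
  ⨆ j : ℤ, ENNReal.ofReal (‖u j‖ * (jb j ^ p * Real.exp (a * |(j : ℝ)| + s * jb j ^ θ)))

/-- The monomial `u^α ū^β`. -/
def mono (u : ℤ → ℂ) (α β : MIdx) : ℂ :=
  (∏ j ∈ α.support, u j ^ α j) * ∏ j ∈ β.support, (starRingEnd ℂ) (u j) ^ β j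

/-- Evaluation of a Hamiltonian given by coefficients: `H(u) = Σ_{α,β} H_{α,β} u^α ū^β`. -/
def heval (H : MIdx → MIdx → ℂ) (u : ℤ → ℂ) : ℂ :=
  ∑' q : MIdx × MIdx, H q.1 q.2 * mono u q.1 q.2

/-- The `j`-th component of the Hamiltonian vector field:
`X_H^{(j)}(u) = i ∂H/∂ū_j = i Σ_{α,β} H_{α,β} β_j u^α ū^{β - e_j}`. -/
def hvf (H : MIdx → MIdx → ℂ) (u : ℤ → ℂ) (j : ℤ) : ℂ :=
  Complex.I * ∑' q : MIdx × MIdx,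
    H q.1 q.2 * (q.2 j : ℂ) * mono u q.1 (q.2 - Finsupp.single j 1)

/-- A map of sequence space is (majorant) analytic on the closed ball of radius `R`:
each component is the sum of a convergent power series in `(u, ū)`. -/
def AnalyticOnBall (θ p s a : ℝ) (Φ : (ℤ → ℂ) → ℤ → ℂ) (R : ℝ) : Prop :=
  ∃ c : ℤ → MIdx → MIdx → ℂ,
    ∀ u : ℤ → ℂ, wnorm θ p s a u ≤ ENNReal.ofReal R → ∀ j : ℤ,
      HasSum (fun q : MIdx × MIdx => c j q.1 q.2 * mono u q.1 q.2) (Φ u j)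

/-- The symplectic form `Ω(u,v) = Im Σ_j u_j conj(v_j)`. -/
def sympForm (u v : ℤ → ℂ) : ℝ := (∑' j : ℤ, u j * (starRingEnd ℂ) (v j)).im

/-- Directional (Gateaux) derivative of a map of sequence space. -/
def dmap (Φ : (ℤ → ℂ) → ℤ → ℂ) (u v : ℤ → ℂ) (j : ℤ) : ℂ :=
  deriv (fun t : ℝ => Φ (fun k => u k + (t : ℂ) * v k) j) 0

/-- A map is symplectic on the closed ball of radius `R`: its differential preserves the
symplectic form (tested on finitely supported tangent vectors). -/
def SymplecticOnBall (θ p s a : ℝ) (Φ : (ℤ → ℂ) → ℤ → ℂ) (R : ℝ) : Prop :=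
  ∀ u : ℤ → ℂ, wnorm θ p s a u ≤ ENNReal.ofReal R →
    ∀ v w : ℤ → ℂ, (Function.support v).Finite → (Function.support w).Finite →
      sympForm (dmap Φ u v) (dmap Φ u w) = sympForm v w

/-- The set `U = {u ∈ w^∞_{p,s,a} : inf_j ⟨j⟩^p e^{a|j|+s⟨j⟩^θ} |u_j| > 0}`. -/
def lowerBddSet (θ p s a : ℝ) : Set (ℤ → ℂ) :=
  {u | wnorm θ p s a u ≠ ⊤ ∧
    0 < ⨅ j : ℤ, ENNReal.ofReal
      (‖u j‖ * (jb j ^ p * Real.exp (a * |(j : ℝ)| + s * jb j ^ θ)))}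

/-!
The weighted infimum is `1`-Lipschitz for the weighted supremum norm, so a ball of radius below `inf_j |u_j| w_j` around `u ∈ U` stays in `U`.
For density, replace each coordinate with `|u_j| w_j < ε / 2` by the real number `ε / (2 w_j)`:
this moves `u` by at most `ε` and bounds the weighted infimum below by `ε / 2`.
-/

namespace WeightedSeq

variable {ι : Type*}

section SeminormedGroup

variable {E : Type*} [SeminormedAddCommGroup E] (w : ι → ℝ)

def weightedSup (u : ι → E) : ℝ≥0∞ := ⨆ i, ENNReal.ofReal (‖u i‖ * w i)

def weightedInf (u : ι → E) : ℝ≥0∞ := ⨅ i, ENNReal.ofReal (‖u i‖ * w i)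

def lowerBdd : Set (ι → E) := {u | weightedSup w u ≠ ⊤ ∧ 0 < weightedInf w u}

variable {w}

theorem ofReal_norm_mul_le_add {W : ℝ} (hW : 0 ≤ W) (x y : E) :
    ENNReal.ofReal (‖x‖ * W) ≤ ENNReal.ofReal (‖y‖ * W) + ENNReal.ofReal (‖x - y‖ * W) := by
  rw [← ENNReal.ofReal_add (by positivity) (by positivity), ← add_mul]
  exact ENNReal.ofReal_le_ofReal (mul_le_mul_of_nonneg_right (norm_le_insert' x y) hW)

theorem ofReal_norm_mul_le_weightedSup (u : ι → E) (i : ι) :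
    ENNReal.ofReal (‖u i‖ * w i) ≤ weightedSup w u :=
  le_iSup (fun i => ENNReal.ofReal (‖u i‖ * w i)) i

theorem weightedSup_le_add (hw : ∀ i, 0 ≤ w i) (u v : ι → E) :
    weightedSup w v ≤ weightedSup w u + weightedSup w (v - u) :=
  iSup_le fun i => (ofReal_norm_mul_le_add (hw i) (v i) (u i)).trans <|
    add_le_add (ofReal_norm_mul_le_weightedSup u i) (ofReal_norm_mul_le_weightedSup (v - u) i)

theorem weightedInf_le_add (hw : ∀ i, 0 ≤ w i) (u v : ι → E) :
    weightedInf w u ≤ weightedInf w v + weightedSup w (v - u) := by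
  rw [weightedInf, weightedInf, ENNReal.iInf_add]
  refine le_iInf fun i => (iInf_le _ i).trans <| (ofReal_norm_mul_le_add (hw i) (u i) (v i)).trans ?_
  rw [norm_sub_rev]
  exact add_le_add le_rfl (ofReal_norm_mul_le_weightedSup (v - u) i)

theorem exists_ball_subset_lowerBdd (hw : ∀ i, 0 ≤ w i) {u : ι → E} (hu : u ∈ lowerBdd w) :
    ∃ ε : ℝ, 0 < ε ∧ ∀ v : ι → E, weightedSup w (v - u) ≤ ENNReal.ofReal ε → v ∈ lowerBdd w := by
  obtain ⟨hu_fin, hu_pos⟩ := hu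
  obtain ⟨ε, -, hε, hε_lt⟩ := ENNReal.lt_iff_exists_real_btwn.mp hu_pos
  refine ⟨ε, ENNReal.ofReal_pos.mp hε, fun v hv => ⟨?_, ?_⟩⟩
  · exact ne_top_of_le_ne_top (ENNReal.add_ne_top.mpr ⟨hu_fin, ENNReal.ofReal_ne_top⟩)
      ((weightedSup_le_add hw u v).trans (add_le_add le_rfl hv))
  · have : weightedInf w u ≤ weightedInf w v + ENNReal.ofReal ε :=
      (weightedInf_le_add hw u v).trans (add_le_add le_rfl hv)
    exact (tsub_pos_iff_lt.mpr hε_lt).trans_le (tsub_le_iff_right.mpr this)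

end SeminormedGroup

section RCLike

variable {𝕜 : Type*} [RCLike 𝕜] (w : ι → ℝ) (c : ℝ)

def raiseTo (u : ι → 𝕜) (i : ι) : 𝕜 :=
  if c ≤ ‖u i‖ * w i then u i else ((c / w i : ℝ) : 𝕜)

variable {w c}

theorem le_norm_raiseTo_mul (hw : ∀ i, 0 < w i) (hc : 0 ≤ c) (u : ι → 𝕜) (i : ι) :
    c ≤ ‖raiseTo w c u i‖ * w i := by
  unfold raiseTo
  split_ifs with h
  · exact h
  · rw [RCLike.norm_ofReal, abs_of_nonneg (div_nonneg hc (hw i).le), div_mul_cancel₀ _ (hw i).ne']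

theorem norm_raiseTo_sub_mul_le (hw : ∀ i, 0 < w i) (hc : 0 ≤ c) (u : ι → 𝕜) (i : ι) :
    ‖raiseTo w c u i - u i‖ * w i ≤ 2 * c := by
  unfold raiseTo
  split_ifs with h
  · simpa using hc
  · have hwi := hw i
    calc ‖((c / w i : ℝ) : 𝕜) - u i‖ * w i ≤ (‖((c / w i : ℝ) : 𝕜)‖ + ‖u i‖) * w i :=
          mul_le_mul_of_nonneg_right (norm_sub_le _ _) hwi.le
      _ = c + ‖u i‖ * w i := by
          rw [add_mul, RCLike.norm_ofReal, abs_of_nonneg (div_nonneg hc hwi.le),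
            div_mul_cancel₀ _ hwi.ne']
      _ ≤ 2 * c := by linarith [not_le.mp h]

theorem exists_lowerBdd_near (hw : ∀ i, 0 < w i) {u : ι → 𝕜} (hu : weightedSup w u ≠ ⊤)
    {ε : ℝ} (hε : 0 < ε) : ∃ v ∈ lowerBdd w, weightedSup w (v - u) ≤ ENNReal.ofReal ε := by
  have hc : 0 ≤ ε / 2 := by positivity
  set v := raiseTo w (ε / 2) u
  have hvu : weightedSup w (v - u) ≤ ENNReal.ofReal ε := iSup_le fun i =>
    ENNReal.ofReal_le_ofReal <|
      (norm_raiseTo_sub_mul_le hw hc u i).trans_eq (mul_div_cancel₀ ε two_ne_zero)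
  refine ⟨v, ⟨?_, ?_⟩, hvu⟩
  · exact ne_top_of_le_ne_top (ENNReal.add_ne_top.mpr ⟨hu, ENNReal.ofReal_ne_top⟩)
      ((weightedSup_le_add (fun i => (hw i).le) u v).trans (add_le_add le_rfl hvu))
  · exact (ENNReal.ofReal_pos.mpr (half_pos hε)).trans_le <|
      le_iInf fun i => ENNReal.ofReal_le_ofReal (le_norm_raiseTo_mul hw hc u i)

end RCLike

end WeightedSeq

open WeightedSeq

def weight (θ p s a : ℝ) (j : ℤ) : ℝ := jb j ^ p * Real.exp (a * |(j : ℝ)| + s * jb j ^ θ)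

theorem weight_pos (θ p s a : ℝ) (j : ℤ) : 0 < weight θ p s a j :=
  mul_pos (Real.rpow_pos_of_pos (one_pos.trans_le (le_max_right _ _)) p) (Real.exp_pos _)

theorem lowerBddSet_eq_lowerBdd (θ p s a : ℝ) : lowerBddSet θ p s a = lowerBdd (weight θ p s a) :=
  rfl

theorem wnorm_eq_weightedSup (θ p s a : ℝ) : wnorm θ p s a = weightedSup (weight θ p s a) := rfl

theorem lowerBddSet_open_dense_general
    (θ p s a : ℝ) :
    (∀ u ∈ lowerBddSet θ p s a, ∃ ε : ℝ, 0 < ε ∧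
      ∀ v : ℤ → ℂ, wnorm θ p s a (fun j => v j - u j) ≤ ENNReal.ofReal ε →
        v ∈ lowerBddSet θ p s a) ∧
    (∀ u : ℤ → ℂ, wnorm θ p s a u ≠ ⊤ → ∀ ε : ℝ, 0 < ε →
      ∃ v ∈ lowerBddSet θ p s a,
        wnorm θ p s a (fun j => v j - u j) ≤ ENNReal.ofReal ε) := by
  rw [lowerBddSet_eq_lowerBdd, wnorm_eq_weightedSup]
  exact ⟨fun u hu => exists_ball_subset_lowerBdd (fun j => (weight_pos θ p s a j).le) hu,
    fun u hu ε hε => exists_lowerBdd_near (weight_pos θ p s a) hu hε⟩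

/-- the set `U` is open and dense in `w^∞_{p,s,a}`
(openness and density are stated via the metric of the weighted sup norm:
every point of `U` has a norm-ball around it contained in `U`, and every element of
`w^∞_{p,s,a}` is approximated in norm by elements of `U`). -/
theorem lowerBddSet_open_dense
    (θ p s a : ℝ) (hθ0 : 0 < θ) (hθ1 : θ < 1) (hp : 1 < p) (hs : 0 < s) (ha : 0 ≤ a) :
    (∀ u ∈ lowerBddSet θ p s a, ∃ ε : ℝ, 0 < ε ∧
      ∀ v : ℤ → ℂ, wnorm θ p s a (fun j => v j - u j) ≤ ENNReal.ofReal ε →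
        v ∈ lowerBddSet θ p s a) ∧
    (∀ u : ℤ → ℂ, wnorm θ p s a u ≠ ⊤ → ∀ ε : ℝ, 0 < ε →
      ∃ v ∈ lowerBddSet θ p s a,
        wnorm θ p s a (fun j => v j - u j) ≤ ENNReal.ofReal ε) :=
  lowerBddSet_open_dense_general θ p s a

end
end
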